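/- arXiv:1109.2165 — 10 statements merged into one kernel-verified Lean document; each statement's English description precedes it below -/
import Mathlib

section
/- Penrose Inequality for RotSym∂_n: Let n ≥ 3 and let r be a profile with nonnegative scalar curvature, i.e. R(s) ≥ 0 for all s ≥ 0. Then m_H(s) ≥ (1/2) r₀^{n−2} for every s ≥ 0; in particular the ADM mass satisfies m_ADM = sup_{s≥0} m_H(s) ≥ (1/2) ( |∂M| / ω_{n−1} )^{(n−2)/(n−1)}, where |∂M| := ω_{n−1} r₀^{n−1} is the area of the boundary and ω_{n−1} is the area of the standard unit (n−1)-sphere. -/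
/-- Penrose Inequality for `RotSym∂_n`.  For a profile with
nonnegative scalar curvature, `m_H(s) ≥ (1/2) r₀^{n-2}` for all `s ≥ 0`; in
particular the ADM mass `sup_{s ≥ 0} m_H(s)` is at least
`(1/2) (|∂M|/ω_{n-1})^{(n-2)/(n-1)}` with `|∂M| = ω_{n-1} r₀^{n-1}`
(expressed by saying that every upper bound of `m_H` on `[0,∞)` is at least
this quantity). -/
theorem penrose_inequality_rotsym
    (n : ℕ) (hn : 3 ≤ n) (r : ℝ → ℝ) (r0 : ℝ)
    (hr0 : 0 < r0) (hr00 : r 0 = r0)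
    (hsmooth : ContDiff ℝ (⊤ : ℕ∞) r)
    (hrpos : ∀ s : ℝ, 0 ≤ s → 0 < r s)
    (hd0 : deriv r 0 = 0)
    (hdpos : ∀ s : ℝ, 0 < s → 0 < deriv r s)
    (mH R : ℝ → ℝ)
    (hmH : ∀ s : ℝ, mH s = (1 / 2) * r s ^ (n - 2) * (1 - (deriv r s) ^ 2))
    (hR : ∀ s : ℝ, R s = ((n : ℝ) - 1) / (r s) ^ 2 *
        (((n : ℝ) - 2) * (1 - (deriv r s) ^ 2) - 2 * r s * deriv (deriv r) s))
    (hscal : ∀ s : ℝ, 0 ≤ s → 0 ≤ R s)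
    (ω : ℝ) (hω : 0 < ω) (A : ℝ) (hA : A = ω * r0 ^ (n - 1)) :
    (∀ s : ℝ, 0 ≤ s → (1 / 2) * r0 ^ (n - 2) ≤ mH s) ∧
    (∀ B : ℝ, (∀ s : ℝ, 0 ≤ s → mH s ≤ B) →
      (1 / 2) * (A / ω) ^ (((n : ℝ) - 2) / ((n : ℝ) - 1)) ≤ B) := by
  have h1 : Differentiable ℝ r := hsmooth.differentiable (by simp)
  have h2 : ContDiff ℝ ((⊤ : ℕ∞) : WithTop ℕ∞) (deriv r) :=
    (contDiff_infty_iff_deriv.mp (hsmooth.of_le (by simp))).2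
  have h2d : Differentiable ℝ (deriv r) := h2.differentiable (by simp)
  have hmHfun : mH = fun s => (1 / 2) * r s ^ (n - 2) * (1 - (deriv r s) ^ 2) :=
    funext hmH
  set D : ℝ → ℝ := fun s =>
    (1 / 2) * ((n - 2 : ℕ) * r s ^ (n - 2 - 1) * deriv r s) * (1 - (deriv r s) ^ 2)
      + (1 / 2) * r s ^ (n - 2) * (0 - (2 : ℕ) * deriv r s ^ (2 - 1) * deriv (deriv r) s)
    with hD
  have key : ∀ s : ℝ, HasDerivAt mH (D s) s := by
    intro s
    rw [hmHfun]
    exact (((h1 s).hasDerivAt.pow (n - 2)).const_mul (1 / 2)).mul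
      ((hasDerivAt_const s (1 : ℝ)).sub ((h2d s).hasDerivAt.pow 2))
  have hn1 : (0 : ℝ) < (n : ℝ) - 1 := by
    have : (3 : ℝ) ≤ (n : ℝ) := by exact_mod_cast hn
    linarith
  have hmono : MonotoneOn mH (Set.Ici (0 : ℝ)) := by
    apply monotoneOn_of_deriv_nonneg (convex_Ici 0)
    · exact Continuous.continuousOn (by
        have : Differentiable ℝ mH := fun s => (key s).differentiableAt
        exact this.continuous)
    · exact fun x _ => ((key x).differentiableAt).differentiableWithinAt
    · intro x hx
      rw [interior_Ici] at hx
      rw [(key x).deriv]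
      have ha : 0 < r x := hrpos x hx.le
      have hb : 0 < deriv r x := hdpos x hx
      have hK : 0 ≤ ((n : ℝ) - 2) * (1 - (deriv r x) ^ 2) - 2 * r x * deriv (deriv r) x := by
        have h := hscal x hx.le
        rw [hR x] at h
        exact le_of_not_gt fun hK => absurd h
          (not_le.mpr (mul_neg_of_pos_of_neg (div_pos hn1 (pow_pos ha 2)) hK))
      have hpow : r x ^ (n - 2) = r x ^ (n - 3) * r x := by
        rw [← pow_succ]; congr 1; omega
      have hidx : n - 2 - 1 = n - 3 := by omega
      have hcast : ((n - 2 : ℕ) : ℝ) = (n : ℝ) - 2 := by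
        have : 2 ≤ n := by omega
        push_cast [this]; ring
      have hDval : D x = (1 / 2) * deriv r x * r x ^ (n - 3) *
          (((n : ℝ) - 2) * (1 - (deriv r x) ^ 2) - 2 * r x * deriv (deriv r) x) := by
        rw [hD]
        simp only [hidx, hpow, hcast]
        ring
      rw [hDval]
      have : (0 : ℝ) ≤ (1 / 2) * deriv r x * r x ^ (n - 3) := by positivity
      exact mul_nonneg this hK
  have hmH0 : mH 0 = (1 / 2) * r0 ^ (n - 2) := by
    rw [hmH, hr00, hd0]; ring
  constructor
  · intro s hs
    have := hmono (Set.self_mem_Ici) (Set.mem_Ici.mpr hs) hs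
    rw [hmH0] at this
    exact this
  · intro B hB
    have hB0 := hB 0 le_rfl
    rw [hmH0] at hB0
    have hAω : A / ω = r0 ^ (n - 1) := by
      rw [hA]; field_simp
    have hrpoweq : (A / ω) ^ (((n : ℝ) - 2) / ((n : ℝ) - 1)) = r0 ^ (n - 2) := by
      rw [hAω, ← Real.rpow_natCast r0 (n - 1), ← Real.rpow_natCast r0 (n - 2),
        ← Real.rpow_mul hr0.le]
      congr 1
      have h1n : ((n - 1 : ℕ) : ℝ) = (n : ℝ) - 1 := by
        have : 1 ≤ n := by omega
        push_cast [this]; ring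
      have h2n : ((n - 2 : ℕ) : ℝ) = (n : ℝ) - 2 := by
        have : 2 ≤ n := by omega
        push_cast [this]; ring
      rw [h1n, h2n]
      field_simp
    rw [hrpoweq]
    exact hB0
end

section
/- Let n ≥ 3 and let r be a profile with R(s) ≥ 0 for all s ≥ 0. Then for every s > 0 one has 0 < r'(s) < 1; more precisely, 1 − r'(s)² ≥ (r₀ / r(s))^{n−2} > 0. (Hence s ↦ r(s) is a valid change of coordinates and the manifold embeds as a radial graph in ℝ^{n+1}.) -/
/-- For a profile with nonnegative scalar curvature, for every
`s > 0` one has `0 < r'(s) < 1`; more precisely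
`1 - r'(s)² ≥ (r₀ / r(s))^{n-2} > 0`. -/
theorem profile_slope_bounds
    (n : ℕ) (hn : 3 ≤ n) (r : ℝ → ℝ) (r0 : ℝ)
    (hr0 : 0 < r0) (hr00 : r 0 = r0)
    (hsmooth : ContDiff ℝ (⊤ : ℕ∞) r)
    (hrpos : ∀ s : ℝ, 0 ≤ s → 0 < r s)
    (hd0 : deriv r 0 = 0)
    (hdpos : ∀ s : ℝ, 0 < s → 0 < deriv r s)
    (mH R : ℝ → ℝ)
    (hmH : ∀ s : ℝ, mH s = (1 / 2) * r s ^ (n - 2) * (1 - (deriv r s) ^ 2))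
    (hR : ∀ s : ℝ, R s = ((n : ℝ) - 1) / (r s) ^ 2 *
        (((n : ℝ) - 2) * (1 - (deriv r s) ^ 2) - 2 * r s * deriv (deriv r) s))
    (hscal : ∀ s : ℝ, 0 ≤ s → 0 ≤ R s) :
    ∀ s : ℝ, 0 < s →
      (0 < deriv r s ∧ deriv r s < 1) ∧
      (r0 / r s) ^ (n - 2) ≤ 1 - (deriv r s) ^ 2 ∧
      0 < (r0 / r s) ^ (n - 2) := by
  have hdr : Differentiable ℝ r := hsmooth.differentiable (by simp)
  have hsm : ContDiff ℝ (((⊤ : ℕ∞) : WithTop ℕ∞)) r := hsmooth.of_le (by simp)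
  have hd' : ContDiff ℝ (((⊤ : ℕ∞) : WithTop ℕ∞)) (deriv r) := by
    have := hsm.iterate_deriv 1
    simpa using this
  have hdd : Differentiable ℝ (deriv r) := hd'.differentiable (by simp)
  set g : ℝ → ℝ := fun s => r s ^ (n - 2) * (1 - (deriv r s) ^ 2) with hg
  -- derivative of g
  have hderiv : ∀ x : ℝ, HasDerivAt g
      ((n - 2 : ℕ) * r x ^ (n - 3) * deriv r x * (1 - (deriv r x) ^ 2)
        + r x ^ (n - 2) * (-(2 * deriv r x * deriv (deriv r) x))) x := by
    intro x
    have h1 : HasDerivAt r (deriv r x) x := (hdr x).hasDerivAt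
    have h2 : HasDerivAt (deriv r) (deriv (deriv r) x) x := (hdd x).hasDerivAt
    have hpow : HasDerivAt (fun s => r s ^ (n - 2))
        ((n - 2 : ℕ) * r x ^ (n - 2 - 1) * deriv r x) x := h1.pow (n - 2)
    have hsq := (hasDerivAt_const x (1 : ℝ)).sub (h2.pow 2)
    have := hpow.mul hsq
    have he : n - 2 - 1 = n - 3 := by omega
    rw [he] at this
    change HasDerivAt g (((n - 2 : ℕ) : ℝ) * r x ^ (n - 3) * deriv r x * (1 - deriv r x ^ 2) +
      r x ^ (n - 2) * (0 - ((2 : ℕ) : ℝ) * deriv r x ^ (2 - 1) * deriv (deriv r) x)) x at this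
    convert this using 1
    push_cast
    ring
  have hmono : MonotoneOn g (Set.Ici (0 : ℝ)) := by
    apply monotoneOn_of_deriv_nonneg (convex_Ici 0)
    · exact (Continuous.continuousOn (by fun_prop))
    · intro x hx
      exact (hderiv x).differentiableAt.differentiableWithinAt
    · intro x hx
      rw [interior_Ici] at hx
      rw [(hderiv x).deriv]
      have hxpos : (0 : ℝ) < x := hx
      have hrx : 0 < r x := hrpos x hxpos.le
      have hA : 0 ≤ ((n : ℝ) - 2) * (1 - (deriv r x) ^ 2) - 2 * r x * deriv (deriv r) x := by
        have h0 := hscal x hxpos.le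
        rw [hR x] at h0
        have hc : 0 < ((n : ℝ) - 1) / (r x) ^ 2 := by
          apply div_pos
          · have : (3 : ℝ) ≤ (n : ℝ) := by exact_mod_cast hn
            linarith
          · positivity
        nlinarith
      have hdx : 0 < deriv r x := hdpos x hxpos
      have hkey : ((n : ℝ) - 2) * r x ^ (n - 3) * deriv r x * (1 - (deriv r x) ^ 2)
          + r x ^ (n - 2) * (-(2 * deriv r x * deriv (deriv r) x))
          = deriv r x * r x ^ (n - 3) *
            (((n : ℝ) - 2) * (1 - (deriv r x) ^ 2) - 2 * r x * deriv (deriv r) x) := by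
        have : r x ^ (n - 2) = r x ^ (n - 3) * r x := by
          rw [← pow_succ]; congr 1; omega
        rw [this]; ring
      have hcast : ((n - 2 : ℕ) : ℝ) = (n : ℝ) - 2 := by
        have : (2 : ℕ) ≤ n := by omega
        push_cast [this]; ring
      rw [hcast, hkey]
      positivity
  intro s hs
  have hrs : 0 < r s := hrpos s hs.le
  have hle : g 0 ≤ g s := hmono Set.self_mem_Ici (Set.mem_Ici.mpr hs.le) hs.le
  have hg0 : g 0 = r0 ^ (n - 2) := by
    simp [hg, hd0, hr00]
  have hmain : (r0 / r s) ^ (n - 2) ≤ 1 - (deriv r s) ^ 2 := by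
    rw [div_pow, div_le_iff₀ (by positivity)]
    rw [hg0] at hle
    calc r0 ^ (n - 2) ≤ r s ^ (n - 2) * (1 - (deriv r s) ^ 2) := hle
      _ = (1 - (deriv r s) ^ 2) * r s ^ (n - 2) := by ring
  have hpos : 0 < (r0 / r s) ^ (n - 2) := by positivity
  have hdx := hdpos s hs
  refine ⟨⟨hdx, ?_⟩, hmain, hpos⟩
  nlinarith
end

section
/- Pinching estimate: Let n ≥ 3 and let r be a profile with R(s) ≥ 0 for all s ≥ 0 and finite ADM mass m_ADM = sup_{s≥0} m_H(s) < ∞. Set r₁ := (2 m_ADM)^{1/(n−2)}. Then for every s ≥ 0, r₀^{n−2} ≤ r(s)^{n−2} (1 − r'(s)²) ≤ r₁^{n−2}; equivalently, 1 − (r₀ / r(s))^{n−2} ≥ r'(s)² ≥ 1 − (r₁ / r(s))^{n−2}. -/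
/-- Pinching estimate.  For a profile with nonnegative scalar
curvature and finite ADM mass `m_ADM = sup_{s ≥ 0} m_H(s)`, setting
`r₁ = (2 m_ADM)^{1/(n-2)}`, one has for every `s ≥ 0`:
`r₀^{n-2} ≤ r(s)^{n-2} (1 - r'(s)²) ≤ r₁^{n-2}`, equivalently
`1 - (r₀/r(s))^{n-2} ≥ r'(s)² ≥ 1 - (r₁/r(s))^{n-2}`. -/
theorem pinching_estimate
    (n : ℕ) (hn : 3 ≤ n) (r : ℝ → ℝ) (r0 : ℝ)
    (hr0 : 0 < r0) (hr00 : r 0 = r0)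
    (hsmooth : ContDiff ℝ (⊤ : ℕ∞) r)
    (hrpos : ∀ s : ℝ, 0 ≤ s → 0 < r s)
    (hd0 : deriv r 0 = 0)
    (hdpos : ∀ s : ℝ, 0 < s → 0 < deriv r s)
    (mH R : ℝ → ℝ)
    (hmH : ∀ s : ℝ, mH s = (1 / 2) * r s ^ (n - 2) * (1 - (deriv r s) ^ 2))
    (hR : ∀ s : ℝ, R s = ((n : ℝ) - 1) / (r s) ^ 2 *
        (((n : ℝ) - 2) * (1 - (deriv r s) ^ 2) - 2 * r s * deriv (deriv r) s))
    (hscal : ∀ s : ℝ, 0 ≤ s → 0 ≤ R s)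
    (mADM : ℝ) (hADM : IsLUB (mH '' Set.Ici (0 : ℝ)) mADM)
    (r1 : ℝ) (hr1 : r1 = (2 * mADM) ^ ((1 : ℝ) / ((n : ℝ) - 2))) :
    ∀ s : ℝ, 0 ≤ s →
      (r0 ^ (n - 2) ≤ r s ^ (n - 2) * (1 - (deriv r s) ^ 2) ∧
        r s ^ (n - 2) * (1 - (deriv r s) ^ 2) ≤ r1 ^ (n - 2)) ∧
      ((deriv r s) ^ 2 ≤ 1 - (r0 / r s) ^ (n - 2) ∧
        1 - (r1 / r s) ^ (n - 2) ≤ (deriv r s) ^ 2) := by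
  intro s hs
  set m := n - 2 with hm
  have hm1 : 1 ≤ m := by omega
  have hm1' : m - 1 + 1 = m := by omega
  have hcast : (m : ℝ) = (n : ℝ) - 2 := by
    have h2 : (2 : ℕ) ≤ n := by omega
    rw [hm, Nat.cast_sub h2]; norm_num
  have hn2 : (0 : ℝ) < (n : ℝ) - 2 := by
    have : (3 : ℝ) ≤ (n : ℝ) := by exact_mod_cast hn
    linarith
  have hsmooth' : ContDiff ℝ ((⊤ : ℕ∞) : WithTop ℕ∞) r := hsmooth.of_le (by simp)
  have hdr : Differentiable ℝ r := (contDiff_infty_iff_deriv.mp hsmooth').1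
  have hdr2 : Differentiable ℝ (deriv r) :=
    (contDiff_infty_iff_deriv.mp (contDiff_infty_iff_deriv.mp hsmooth').2).1
  set F : ℝ → ℝ := fun t => (1 / 2) * r t ^ m * (1 - (deriv r t) ^ 2) with hF
  have hmHF : mH = F := funext hmH
  have hFderiv : ∀ t : ℝ, HasDerivAt F
      ((1 / 2) * ((m : ℝ) * r t ^ (m - 1) * deriv r t) * (1 - (deriv r t) ^ 2)
        + (1 / 2) * r t ^ m *
          (0 - (2 : ℕ) * deriv r t ^ (2 - 1) * deriv (deriv r) t)) t := by
    intro t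
    have h1 : HasDerivAt r (deriv r t) t := (hdr t).hasDerivAt
    have h2 : HasDerivAt (deriv r) (deriv (deriv r) t) t := (hdr2 t).hasDerivAt
    have hA : HasDerivAt (fun t => (1 / 2 : ℝ) * r t ^ m)
        ((1 / 2) * ((m : ℝ) * r t ^ (m - 1) * deriv r t)) t := (h1.pow m).const_mul _
    have hB : HasDerivAt (fun t => 1 - (deriv r t) ^ 2)
        (0 - ((2 : ℕ) * deriv r t ^ (2 - 1) * deriv (deriv r) t)) t :=
      (hasDerivAt_const t 1).sub (h2.pow 2)
    exact hA.mul hB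
  have hFd : Differentiable ℝ F := fun t => (hFderiv t).differentiableAt
  have hmono : MonotoneOn F (Set.Ici 0) := by
    apply monotoneOn_of_deriv_nonneg (convex_Ici 0) hFd.continuous.continuousOn
      (hFd.differentiableOn)
    intro t ht
    rw [interior_Ici] at ht
    rw [(hFderiv t).deriv]
    have hrt : 0 < r t := hrpos t ht.le
    have hft : 0 < deriv r t := hdpos t ht
    have hK : 0 ≤ ((n : ℝ) - 2) * (1 - (deriv r t) ^ 2) - 2 * r t * deriv (deriv r) t := by
      have h0 := hscal t ht.le
      rw [hR t] at h0
      have hc : 0 < ((n : ℝ) - 1) / (r t) ^ 2 :=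
        div_pos (by linarith) (pow_pos hrt 2)
      nlinarith
    have hrm : r t ^ m = r t ^ (m - 1) * r t := by
      conv_lhs => rw [← hm1', pow_succ]
    have heq : (1 / 2 : ℝ) * ((m : ℝ) * r t ^ (m - 1) * deriv r t) * (1 - (deriv r t) ^ 2)
        + (1 / 2) * r t ^ m * (0 - (2 : ℕ) * deriv r t ^ (2 - 1) * deriv (deriv r) t)
        = (1 / 2) * (r t ^ (m - 1) * deriv r t) *
          (((n : ℝ) - 2) * (1 - (deriv r t) ^ 2) - 2 * r t * deriv (deriv r) t) := by
      rw [hrm, ← hcast]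
      push_cast
      ring
    rw [heq]
    have : 0 ≤ r t ^ (m - 1) * deriv r t :=
      mul_nonneg (pow_nonneg hrt.le _) hft.le
    positivity
  -- key inequalities on mH
  have hmH0 : mH 0 = (1 / 2) * r0 ^ m := by
    rw [hmH 0, hr00, hd0]; ring
  have hlow : mH 0 ≤ mH s := by
    rw [hmHF]; exact hmono (Set.self_mem_Ici) hs hs
  have hup : mH s ≤ mADM := hADM.1 ⟨s, hs, rfl⟩
  have hmADMpos : 0 < 2 * mADM := by
    have h0 : mH 0 ≤ mADM := hADM.1 ⟨0, Set.self_mem_Ici, rfl⟩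
    have : 0 < r0 ^ m := pow_pos hr0 m
    rw [hmH0] at h0; linarith
  have hr1m : r1 ^ m = 2 * mADM := by
    rw [hr1, ← Real.rpow_natCast _ m, ← Real.rpow_mul hmADMpos.le, hcast,
      one_div, inv_mul_cancel₀ (ne_of_gt hn2), Real.rpow_one]
  have hA : r0 ^ m ≤ r s ^ m * (1 - (deriv r s) ^ 2) := by
    have := hlow
    rw [hmH0, hmH s] at this
    linarith
  have hB : r s ^ m * (1 - (deriv r s) ^ 2) ≤ r1 ^ m := by
    rw [hr1m]
    have := hup
    rw [hmH s] at this
    linarith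
  refine ⟨⟨hA, hB⟩, ?_, ?_⟩
  · have hrs : 0 < r s ^ m := pow_pos (hrpos s hs) m
    have h1 : r0 ^ m / r s ^ m ≤ 1 - (deriv r s) ^ 2 :=
      (div_le_iff₀ hrs).mpr (by linarith)
    rw [div_pow]; linarith
  · have hrs : 0 < r s ^ m := pow_pos (hrpos s hs) m
    have h1 : 1 - (deriv r s) ^ 2 ≤ r1 ^ m / r s ^ m :=
      (le_div_iff₀ hrs).mpr (by linarith)
    rw [div_pow]; linarith
end

section
/- Graph slope comparison with Schwarzschild: Let n ≥ 3 and let r be a profile with R(s) ≥ 0 for all s ≥ 0. Then for every s > 0 (so that r(s) > r₀), the slope dz/dr of the radial graph of the manifold satisfies √(1 − r'(s)²) / r'(s) ≥ √( r₀^{n−2} / ( r(s)^{n−2} − r₀^{n−2} ) ), i.e. the graph is at least as steep as the graph of the Schwarzschild space of mass m₀ = (1/2) r₀^{n−2} at the same radius. -/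
/-- Graph slope comparison with Schwarzschild.  For a profile with
nonnegative scalar curvature and every `s > 0` (so that `r(s) > r₀`), the slope
`dz/dr = √(1 - r'(s)²)/r'(s)` of the radial graph is at least
`√(r₀^{n-2}/(r(s)^{n-2} - r₀^{n-2}))`, the slope of the Schwarzschild graph of
mass `m₀ = (1/2) r₀^{n-2}` at the same radius. -/
theorem graph_slope_comparison
    (n : ℕ) (hn : 3 ≤ n) (r : ℝ → ℝ) (r0 : ℝ)
    (hr0 : 0 < r0) (hr00 : r 0 = r0)
    (hsmooth : ContDiff ℝ (⊤ : ℕ∞) r)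
    (hrpos : ∀ s : ℝ, 0 ≤ s → 0 < r s)
    (hd0 : deriv r 0 = 0)
    (hdpos : ∀ s : ℝ, 0 < s → 0 < deriv r s)
    (mH R : ℝ → ℝ)
    (hmH : ∀ s : ℝ, mH s = (1 / 2) * r s ^ (n - 2) * (1 - (deriv r s) ^ 2))
    (hR : ∀ s : ℝ, R s = ((n : ℝ) - 1) / (r s) ^ 2 *
        (((n : ℝ) - 2) * (1 - (deriv r s) ^ 2) - 2 * r s * deriv (deriv r) s))
    (hscal : ∀ s : ℝ, 0 ≤ s → 0 ≤ R s) :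
    ∀ s : ℝ, 0 < s →
      r0 < r s ∧
      Real.sqrt (r0 ^ (n - 2) / (r s ^ (n - 2) - r0 ^ (n - 2))) ≤
        Real.sqrt (1 - (deriv r s) ^ 2) / deriv r s := by
  intro s hs
  set k := n - 2 with hkdef
  have hk1 : 1 ≤ k := by omega
  have hkc : ((k : ℕ) : ℝ) = (n : ℝ) - 2 := by
    rw [hkdef, Nat.cast_sub (by omega)]; norm_num
  have hdr : Differentiable ℝ r := hsmooth.differentiable (by simp)
  have hdr2 : Differentiable ℝ (deriv r) := by
    have h' : ContDiff ℝ (↑(⊤:ℕ∞)) r := hsmooth.of_le (by simp)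
    exact ((contDiff_infty_iff_deriv.mp h').2).differentiable (by simp)
  -- r0 < r s
  have hmono : StrictMonoOn r (Set.Icc 0 s) :=
    strictMonoOn_of_deriv_pos (convex_Icc 0 s) hdr.continuous.continuousOn
      (by rw [interior_Icc]; intro x hx; exact hdpos x hx.1)
  have hrs : r0 < r s := by
    have := hmono (Set.left_mem_Icc.mpr hs.le) (Set.right_mem_Icc.mpr hs.le) hs
    rwa [hr00] at this
  refine ⟨hrs, ?_⟩
  -- derivative of mH
  have hmHeq : mH = fun y => (1 / 2) * r y ^ k * (1 - (deriv r y) ^ 2) := funext hmH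
  have hD : ∀ x : ℝ, HasDerivAt mH
      ((1 / 2) * ((k : ℝ) * r x ^ (k - 1) * deriv r x) * (1 - (deriv r x) ^ 2)
        + (1 / 2) * r x ^ k * (-(2 * deriv r x ^ (2 - 1) * deriv (deriv r) x))) x := by
    intro x
    rw [hmHeq]
    have h1 : HasDerivAt (fun y => r y ^ k) ((k : ℝ) * r x ^ (k - 1) * deriv r x) x :=
      (hdr x).hasDerivAt.pow k
    have h2 : HasDerivAt (fun y => 1 - (deriv r y) ^ 2)
        (-(2 * deriv r x ^ (2 - 1) * deriv (deriv r) x)) x := by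
      simpa using (hasDerivAt_const x (1 : ℝ)).fun_sub (((hdr2 x).hasDerivAt).fun_pow 2)
    have := ((h1.const_mul (1 / 2 : ℝ)).fun_mul h2)
    convert this using 1
    try ring
  -- mH monotone on [0, s]
  have hmono2 : MonotoneOn mH (Set.Icc 0 s) := by
    apply monotoneOn_of_deriv_nonneg (convex_Icc 0 s)
    · exact fun x _ => ((hD x).continuousAt).continuousWithinAt
    · exact fun x _ => ((hD x).differentiableAt).differentiableWithinAt
    · rw [interior_Icc]
      intro x hx
      rw [(hD x).deriv]
      have hxp : 0 < x := hx.1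
      have hrx : 0 < r x := hrpos x hxp.le
      have hpx : 0 < deriv r x := hdpos x hxp
      have hC : 0 ≤ ((n : ℝ) - 2) * (1 - (deriv r x) ^ 2) - 2 * r x * deriv (deriv r) x := by
        have h0 := hscal x hxp.le
        rw [hR x] at h0
        have hf : 0 < ((n : ℝ) - 1) / (r x) ^ 2 := by
          have h3 : (3:ℝ) ≤ (n:ℝ) := by exact_mod_cast hn
          apply div_pos (by linarith) (by positivity)
        nlinarith
      have hrk1 : (0:ℝ) ≤ r x ^ (k - 1) := (pow_pos hrx _).le
      have hpow : r x ^ k = r x ^ (k - 1) * r x := by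
        conv_lhs => rw [show k = (k - 1) + 1 by omega]
        rw [pow_succ]
      have : (1 / 2) * ((k : ℝ) * r x ^ (k - 1) * deriv r x) * (1 - (deriv r x) ^ 2)
          + (1 / 2) * r x ^ k * (-(2 * deriv r x ^ (2 - 1) * deriv (deriv r) x))
          = (1 / 2) * deriv r x * r x ^ (k - 1) *
            (((n : ℝ) - 2) * (1 - (deriv r x) ^ 2) - 2 * r x * deriv (deriv r) x) := by
        rw [hpow, hkc]; ring
      rw [this]
      positivity
  -- mass inequality
  have hmass : r0 ^ k ≤ r s ^ k * (1 - (deriv r s) ^ 2) := by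
    have := hmono2 (Set.left_mem_Icc.mpr hs.le) (Set.right_mem_Icc.mpr hs.le) hs.le
    rw [hmH 0, hmH s, hr00, hd0] at this
    nlinarith
  set p := deriv r s with hp
  set A := 1 - p ^ 2 with hA
  have hps : 0 < p := hdpos s hs
  have hrsp : 0 < r s := hrpos s hs.le
  have hR0 : (0:ℝ) < r0 ^ k := pow_pos hr0 _
  have hRk : r0 ^ k < r s ^ k := pow_lt_pow_left₀ hrs hr0.le (by omega)
  have hApos : 0 < A := by nlinarith [pow_pos hrsp k]
  have hstep : r0 ^ k / (r s ^ k - r0 ^ k) ≤ A / p ^ 2 := by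
    rw [div_le_div_iff₀ (by linarith) (by positivity)]
    have : p ^ 2 = 1 - A := by rw [hA]; ring
    nlinarith
  calc Real.sqrt (r0 ^ k / (r s ^ k - r0 ^ k)) ≤ Real.sqrt (A / p ^ 2) :=
        Real.sqrt_le_sqrt hstep
    _ = Real.sqrt A / p := by
        rw [Real.sqrt_div hApos.le, Real.sqrt_sq hps.le]
end

section
/- Nonnegativity of the depth (integral comparison form): Let n ≥ 3 and let r be a profile with R(s) ≥ 0 for all s ≥ 0. Then for every s₁ > 0, ∫₀^{s₁} √(1 − r'(t)²) dt ≥ ∫_{r₀}^{r(s₁)} √( r₀^{n−2} / ( ρ^{n−2} − r₀^{n−2} ) ) dρ, where the (convergent) right-hand improper integral is the vertical drop of the graph of the Schwarzschild space of mass m₀ = (1/2) r₀^{n−2} between radii r₀ and r(s₁). Consequently, when the graph of the manifold is normalized to agree with the Schwarzschild graph at radius r(s₁), the boundary of the manifold lies at a height −L ≤ 0 below the Schwarzschild horizon, i.e. the depth L is nonnegative. -/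
open MeasureTheory intervalIntegral

/-- Nonnegativity of the depth (integral comparison form).  For a
profile with nonnegative scalar curvature and every `s₁ > 0`, the vertical drop
`∫₀^{s₁} √(1 - r'(t)²) dt` of the graph of the manifold is at least the
(convergent) vertical drop
`∫_{r₀}^{r(s₁)} √(r₀^{n-2}/(ρ^{n-2} - r₀^{n-2})) dρ`
of the Schwarzschild graph of mass `m₀ = (1/2) r₀^{n-2}` between radii `r₀` and
`r(s₁)`; hence the depth `L` is nonnegative. -/
theorem depth_nonneg_integral_comparison
    (n : ℕ) (hn : 3 ≤ n) (r : ℝ → ℝ) (r0 : ℝ)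
    (hr0 : 0 < r0) (hr00 : r 0 = r0)
    (hsmooth : ContDiff ℝ (⊤ : ℕ∞) r)
    (hrpos : ∀ s : ℝ, 0 ≤ s → 0 < r s)
    (hd0 : deriv r 0 = 0)
    (hdpos : ∀ s : ℝ, 0 < s → 0 < deriv r s)
    (mH R : ℝ → ℝ)
    (hmH : ∀ s : ℝ, mH s = (1 / 2) * r s ^ (n - 2) * (1 - (deriv r s) ^ 2))
    (hR : ∀ s : ℝ, R s = ((n : ℝ) - 1) / (r s) ^ 2 *
        (((n : ℝ) - 2) * (1 - (deriv r s) ^ 2) - 2 * r s * deriv (deriv r) s))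
    (hscal : ∀ s : ℝ, 0 ≤ s → 0 ≤ R s) :
    ∀ s₁ : ℝ, 0 < s₁ →
      IntervalIntegrable
        (fun ρ : ℝ => Real.sqrt (r0 ^ (n - 2) / (ρ ^ (n - 2) - r0 ^ (n - 2))))
        volume r0 (r s₁) ∧
      (∫ ρ in r0..(r s₁),
          Real.sqrt (r0 ^ (n - 2) / (ρ ^ (n - 2) - r0 ^ (n - 2)))) ≤
        ∫ t in (0 : ℝ)..s₁, Real.sqrt (1 - (deriv r t) ^ 2) := by
  intro s₁ hs₁
  have hdiff : Differentiable ℝ r := hsmooth.differentiable (by simp)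
  have hsm' : ContDiff ℝ ((⊤ : ℕ∞) : WithTop ℕ∞) (deriv r) :=
    (contDiff_infty_iff_deriv.mp (hsmooth.of_le (by simp))).2
  have hdiff' : Differentiable ℝ (deriv r) := hsm'.differentiable (by simp)
  have hcont' : Continuous (deriv r) := hdiff'.continuous
  have hn3 : (3:ℝ) ≤ (n:ℝ) := by exact_mod_cast hn
  have hcast : ((n-2:ℕ):ℝ) = (n:ℝ) - 2 := by
    push_cast [Nat.cast_sub (by omega : 2 ≤ n)]; ring
  set d := deriv r with hdd
  set φ : ℝ → ℝ := fun s => r s ^ (n-2) * (1 - d s ^ 2) with hφ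
  -- derivative of φ
  have hφd : ∀ x : ℝ, HasDerivAt φ
      ((↑(n-2) * r x ^ (n-3) * d x) * (1 - d x ^ 2)
        + r x ^ (n-2) * (0 - 2 * d x ^ 1 * deriv d x)) x := by
    intro x
    have h1 : HasDerivAt (fun s => r s ^ (n-2)) (↑(n-2) * r x ^ (n-2-1) * d x) x :=
      (hdiff x).hasDerivAt.pow (n-2)
    have h2 : HasDerivAt (fun s => 1 - d s ^ 2) (0 - 2 * d x ^ (2-1) * deriv d x) x :=
      (hasDerivAt_const x (1:ℝ)).sub ((hdiff' x).hasDerivAt.pow 2)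
    have e : n - 2 - 1 = n - 3 := by omega
    rw [e] at h1
    have h3 : HasDerivAt φ _ x := h1.mul h2
    simpa using h3
  -- bracket nonneg
  have hB : ∀ x : ℝ, 0 ≤ x → 0 ≤ ((n:ℝ)-2) * (1 - d x ^ 2) - 2 * r x * deriv d x := by
    intro x hx
    have h1 := hscal x hx
    rw [hR x] at h1
    have h2 : (0:ℝ) < ((n:ℝ)-1) / (r x)^2 := by
      have h3 := hrpos x hx
      apply div_pos (by linarith) (by positivity)
    exact nonneg_of_mul_nonneg_right h1 h2
  have hφmono : MonotoneOn φ (Set.Ici 0) := by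
    apply monotoneOn_of_deriv_nonneg (convex_Ici 0)
    · exact (Continuous.continuousOn (by fun_prop))
    · exact fun x _ => ((hφd x).differentiableAt).differentiableWithinAt
    · intro x hx
      rw [interior_Ici] at hx
      rw [(hφd x).deriv]
      have hb := hB x hx.le
      have hdx := hdpos x hx
      have hrx := hrpos x hx.le
      have hpow : r x ^ (n-2) = r x ^ (n-3) * r x := by
        rw [← pow_succ]; congr 1; omega
      have hrp : (0:ℝ) < r x ^ (n-3) := pow_pos hrx _
      rw [hpow, hcast]
      nlinarith [mul_nonneg (mul_nonneg hrp.le hdx.le) hb]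
  have hφ0 : φ 0 = r0 ^ (n-2) := by
    simp [hφ, hr00, hd0]
  have hkey : ∀ s : ℝ, 0 ≤ s → r0 ^ (n-2) ≤ r s ^ (n-2) * (1 - d s ^ 2) := by
    intro s hs
    have := hφmono Set.self_mem_Ici hs hs
    rw [hφ0] at this
    exact this
  have hCpos : (0:ℝ) < r0 ^ (n-2) := pow_pos hr0 _
  -- strict monotonicity of r on [0, s₁]
  have hmono : StrictMonoOn r (Set.Icc 0 s₁) := by
    apply strictMonoOn_of_deriv_pos (convex_Icc 0 s₁) hdiff.continuous.continuousOn
    intro x hx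
    rw [interior_Icc] at hx
    exact hdpos x hx.1
  have hr0rs : r0 < r s₁ := by
    rw [← hr00]
    exact hmono ⟨le_refl 0, hs₁.le⟩ ⟨hs₁.le, le_refl s₁⟩ hs₁
  have himg : r '' Set.Icc 0 s₁ = Set.Icc r0 (r s₁) := by
    apply Set.Subset.antisymm
    · rintro _ ⟨x, hx, rfl⟩
      refine ⟨?_, hmono.monotoneOn hx ⟨hs₁.le, le_refl s₁⟩ hx.2⟩
      rw [← hr00]
      exact hmono.monotoneOn ⟨le_refl 0, hs₁.le⟩ hx hx.1
    · rw [← hr00]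
      exact intermediate_value_Icc hs₁.le hdiff.continuous.continuousOn
  set g : ℝ → ℝ := fun ρ : ℝ => Real.sqrt (r0 ^ (n - 2) / (ρ ^ (n - 2) - r0 ^ (n - 2))) with hg
  -- pointwise bound
  have hFG : ∀ t ∈ Set.Icc (0:ℝ) s₁, |d t| * g (r t) ≤ Real.sqrt (1 - d t ^ 2) := by
    intro t ht
    have hdt : 0 ≤ d t := by
      rcases eq_or_lt_of_le ht.1 with h0 | h0
      · rw [← h0, hd0]
      · exact (hdpos t h0).le
    rw [abs_of_nonneg hdt]
    rcases eq_or_lt_of_le ht.1 with h0 | h0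
    · rw [← h0, hd0]
      simpa using Real.sqrt_nonneg (1 - d 0 ^ 2)
    · have hrt0 : r0 < r t := by
        rw [← hr00]
        exact hmono ⟨le_refl 0, hs₁.le⟩ ht h0
      have hXC : r0 ^ (n-2) < r t ^ (n-2) :=
        pow_lt_pow_left₀ hrt0 hr0.le (by omega)
      have hXCpos : (0:ℝ) < r t ^ (n-2) - r0 ^ (n-2) := sub_pos.mpr hXC
      have hXpos : (0:ℝ) < r t ^ (n-2) := lt_trans hCpos hXC
      have hk := hkey t ht.1
      have heq : d t * g (r t) = Real.sqrt (d t ^ 2 * (r0 ^ (n-2) / (r t ^ (n-2) - r0 ^ (n-2)))) := by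
        rw [Real.sqrt_mul (sq_nonneg _), Real.sqrt_sq hdt, hg]
      rw [heq]
      apply Real.sqrt_le_sqrt
      rw [mul_div_assoc', div_le_iff₀ hXCpos]
      nlinarith
  -- measurability and integrability of F
  have hFmeas : Measurable (fun t => |d t| * g (r t)) := by
    apply (hcont'.abs.measurable).mul
    apply Real.continuous_sqrt.measurable.comp
    exact measurable_const.div (((hdiff.continuous.pow (n-2)).sub continuous_const).measurable)
  have hGcont : Continuous (fun t => Real.sqrt (1 - d t ^ 2)) := by
    apply Real.continuous_sqrt.comp
    fun_prop
  have hGint : IntegrableOn (fun t => Real.sqrt (1 - d t ^ 2)) (Set.Icc 0 s₁) :=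
    hGcont.integrableOn_Icc
  have hFint : IntegrableOn (fun t => |d t| * g (r t)) (Set.Icc 0 s₁) := by
    apply Integrable.mono' hGint (hFmeas.aestronglyMeasurable.restrict)
    filter_upwards [ae_restrict_mem measurableSet_Icc] with t ht
    rw [Real.norm_eq_abs, abs_of_nonneg (mul_nonneg (abs_nonneg _) (Real.sqrt_nonneg _))]
    exact hFG t ht
  have hderiv : ∀ x ∈ Set.Icc (0:ℝ) s₁, HasDerivWithinAt r (d x) (Set.Icc 0 s₁) x :=
    fun x _ => (hdiff x).hasDerivAt.hasDerivWithinAt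
  have hiff := integrableOn_image_iff_integrableOn_abs_deriv_smul measurableSet_Icc hderiv
    hmono.injOn g
  rw [himg] at hiff
  have hgint : IntegrableOn g (Set.Icc r0 (r s₁)) := by
    rw [hiff]
    simpa [smul_eq_mul] using hFint
  constructor
  · rw [intervalIntegrable_iff_integrableOn_Icc_of_le hr0rs.le]
    exact hgint
  · have heq2 := integral_image_eq_integral_abs_deriv_smul measurableSet_Icc hderiv
      hmono.injOn g
    rw [himg] at heq2
    rw [intervalIntegral.integral_of_le hr0rs.le, intervalIntegral.integral_of_le hs₁.le,
      ← MeasureTheory.integral_Icc_eq_integral_Ioc, ← MeasureTheory.integral_Icc_eq_integral_Ioc]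
    calc (∫ ρ in Set.Icc r0 (r s₁), g ρ) = ∫ t in Set.Icc (0:ℝ) s₁, |d t| • g (r t) := heq2
      _ ≤ ∫ t in Set.Icc (0:ℝ) s₁, Real.sqrt (1 - d t ^ 2) := by
          apply setIntegral_mono_on (by simpa [smul_eq_mul] using hFint) hGint measurableSet_Icc
          intro t ht
          simpa [smul_eq_mul] using hFG t ht
end

section
/- Outer-region metric estimate (radial part of the precise near-equality theorem): Let n ≥ 3, let r be a profile with R(s) ≥ 0 for all s ≥ 0, and suppose m_H(s) ≤ (1+δ)·(1/2) r₀^{n−2} for all s, where 0 ≤ δ < 1. Set r_δ := (1+√δ)^{1/(n−2)} r₀. Then for every s with r(s) ≥ r_δ, (1 − √δ) · ( 1 − (r₀ / r(s))^{n−2} ) ≤ r'(s)² ≤ 1 − (r₀ / r(s))^{n−2}. (Equivalently, the ratio of the radial metric coefficient of the manifold to that of the Schwarzschild space of mass m₀ = (1/2) r₀^{n−2} at the same radius lies between 1 and 1/(1 − √δ).) -/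
/-- Outer-region metric estimate.  For a profile with nonnegative
scalar curvature and `m_H(s) ≤ (1+δ)(1/2) r₀^{n-2}` for all `s ≥ 0` (where
`0 ≤ δ < 1`), setting `r_δ = (1+√δ)^{1/(n-2)} r₀`, one has for every `s ≥ 0`
with `r(s) ≥ r_δ`:
`(1-√δ)(1 - (r₀/r(s))^{n-2}) ≤ r'(s)² ≤ 1 - (r₀/r(s))^{n-2}`. -/
theorem outer_region_metric_estimate
    (n : ℕ) (hn : 3 ≤ n) (r : ℝ → ℝ) (r0 δ : ℝ)
    (hr0 : 0 < r0) (hr00 : r 0 = r0)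
    (hsmooth : ContDiff ℝ (⊤ : ℕ∞) r)
    (hrpos : ∀ s : ℝ, 0 ≤ s → 0 < r s)
    (hd0 : deriv r 0 = 0)
    (hdpos : ∀ s : ℝ, 0 < s → 0 < deriv r s)
    (mH R : ℝ → ℝ)
    (hmH : ∀ s : ℝ, mH s = (1 / 2) * r s ^ (n - 2) * (1 - (deriv r s) ^ 2))
    (hR : ∀ s : ℝ, R s = ((n : ℝ) - 1) / (r s) ^ 2 *
        (((n : ℝ) - 2) * (1 - (deriv r s) ^ 2) - 2 * r s * deriv (deriv r) s))
    (hscal : ∀ s : ℝ, 0 ≤ s → 0 ≤ R s)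
    (hδ0 : 0 ≤ δ) (hδ1 : δ < 1)
    (hmass : ∀ s : ℝ, 0 ≤ s → mH s ≤ (1 + δ) * ((1 / 2) * r0 ^ (n - 2)))
    (rδ : ℝ) (hrδ : rδ = (1 + Real.sqrt δ) ^ ((1 : ℝ) / ((n : ℝ) - 2)) * r0) :
    ∀ s : ℝ, 0 ≤ s → rδ ≤ r s →
      (1 - Real.sqrt δ) * (1 - (r0 / r s) ^ (n - 2)) ≤ (deriv r s) ^ 2 ∧
      (deriv r s) ^ 2 ≤ 1 - (r0 / r s) ^ (n - 2) := by
  intro s hs hrs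
  set k := n - 2 with hk
  have hk1 : 1 ≤ k := by omega
  have hkcast : (k : ℝ) = (n : ℝ) - 2 := by
    have : (k : ℝ) = ((n : ℝ) - 2) := by
      rw [hk]; push_cast [Nat.cast_sub (by omega : 2 ≤ n)]; ring
    exact this
  have hdr : Differentiable ℝ r := hsmooth.differentiable (by simp)
  have hd2 := (contDiff_infty_iff_deriv.mp (hsmooth.of_le (by simp))).2
  have hdd : Differentiable ℝ (deriv r) := hd2.differentiable (by simp)
  set F : ℝ → ℝ := fun t => (1 / 2) * r t ^ k * (1 - (deriv r t) ^ 2) with hF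
  -- derivative of F
  have hHD : ∀ t : ℝ, HasDerivAt F
      ((1/2) * (((k:ℝ) * r t ^ (k-1) * deriv r t) * (1 - (deriv r t)^2)
        + r t ^ k * (0 - 2 * deriv r t ^ 1 * deriv (deriv r) t))) t := by
    intro t
    have h1 : HasDerivAt (fun u => r u ^ k) ((k:ℝ) * r t ^ (k-1) * deriv r t) t :=
      (hdr t).hasDerivAt.pow k
    have h2 : HasDerivAt (fun u => 1 - (deriv r u) ^ 2)
        (0 - 2 * deriv r t ^ 1 * deriv (deriv r) t) t := by
      have : HasDerivAt (fun u => deriv r u ^ 2) _ t := ((hdd t).hasDerivAt.pow 2)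
      simpa using (hasDerivAt_const t (1:ℝ)).fun_sub this
    have h3 := (h1.mul h2).const_mul (1/2 : ℝ)
    have hFeq : (fun y => (1/2 : ℝ) * (r y ^ k * (1 - deriv r y ^ 2))) = F := by
      funext y; ring
    exact hFeq ▸ h3
  have hderivF : ∀ t : ℝ, deriv F t =
      (1/2) * (((k:ℝ) * r t ^ (k-1) * deriv r t) * (1 - (deriv r t)^2)
        + r t ^ k * (0 - 2 * deriv r t ^ 1 * deriv (deriv r) t)) := fun t => (hHD t).deriv
  -- monotonicity
  have hmono : MonotoneOn F (Set.Ici 0) := by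
    apply monotoneOn_of_deriv_nonneg (convex_Ici 0)
    · exact (Differentiable.continuous (fun t => (hHD t).differentiableAt)).continuousOn
    · intro x hx
      exact ((hHD x).differentiableAt).differentiableWithinAt
    · intro x hx
      rw [interior_Ici] at hx
      have hx0 : (0:ℝ) < x := hx
      have hrx : 0 < r x := hrpos x hx0.le
      have hdx : 0 < deriv r x := hdpos x hx0
      have hE : 0 ≤ ((n : ℝ) - 2) * (1 - (deriv r x) ^ 2) - 2 * r x * deriv (deriv r) x := by
        have hRx := hscal x hx0.le
        rw [hR x] at hRx
        have hpos : 0 < ((n : ℝ) - 1) / (r x) ^ 2 := by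
          have h3 : (3:ℝ) ≤ n := by exact_mod_cast hn
          apply div_pos (by linarith) (by positivity)
        exact nonneg_of_mul_nonneg_right hRx hpos
      rw [hderivF x]
      have hrw : (1/2 : ℝ) * (((k:ℝ) * r x ^ (k-1) * deriv r x) * (1 - (deriv r x)^2)
          + r x ^ k * (0 - 2 * deriv r x ^ 1 * deriv (deriv r) x))
          = (1/2) * r x ^ (k-1) * deriv r x *
            (((n:ℝ) - 2) * (1 - (deriv r x)^2) - 2 * r x * deriv (deriv r) x) := by
        have hpow : r x ^ (k-1) * r x = r x ^ k := by
          rw [← pow_succ]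
          congr 1
          omega
        rw [hkcast.symm, ← hpow]
        ring
      rw [hrw]
      positivity
  -- lower bound on mH
  have hF0 : F 0 = (1/2) * r0 ^ k := by
    simp [hF, hd0, hr00]
  have hFs_ge : (1/2) * r0 ^ k ≤ F s := by
    rw [← hF0]
    exact hmono (Set.self_mem_Ici) hs hs
  have hFs_le : F s ≤ (1 + δ) * ((1/2) * r0 ^ k) := by
    have := hmass s hs
    rwa [hmH s] at this
  have hrspos : 0 < r s := hrpos s hs
  set x := (r0 / r s) ^ k with hx
  have hxpos : 0 < x := by positivity
  have hxdiv : x = r0 ^ k / r s ^ k := div_pow r0 (r s) k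
  -- upper bound on (deriv r s)^2
  have hupper : (deriv r s) ^ 2 ≤ 1 - x := by
    have h1 : r0 ^ k ≤ r s ^ k * (1 - (deriv r s)^2) := by
      have : (1/2 : ℝ) * r0 ^ k ≤ (1/2) * r s ^ k * (1 - (deriv r s)^2) := hFs_ge
      linarith
    have hrk : 0 < r s ^ k := by positivity
    have h2 : r0 ^ k / r s ^ k ≤ 1 - deriv r s ^ 2 := by
      rw [div_le_iff₀ hrk]
      nlinarith
    rw [hxdiv]
    linarith
  refine ⟨?_, hupper⟩
  -- x ≤ 1/(1+√δ)
  set t := Real.sqrt δ with ht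
  have ht0 : 0 ≤ t := Real.sqrt_nonneg δ
  have ht2 : t ^ 2 = δ := Real.sq_sqrt hδ0
  have hc1 : (1:ℝ) ≤ 1 + t := by linarith
  have hrδk : rδ ^ k = (1 + t) * r0 ^ k := by
    rw [hrδ, mul_pow]
    congr 1
    rw [← Real.rpow_natCast ((1 + t) ^ ((1:ℝ)/((n:ℝ)-2))) k,
        ← Real.rpow_mul (by linarith), hkcast]
    rw [one_div_mul_cancel (by
      have : (3:ℝ) ≤ n := by exact_mod_cast hn
      linarith)]
    exact Real.rpow_one _
  have hxle : x * (1 + t) ≤ 1 := by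
    have hrδpos : 0 < rδ := by
      rw [hrδ]
      positivity
    have hk' : rδ ^ k ≤ r s ^ k := pow_le_pow_left₀ hrδpos.le hrs k
    rw [hrδk] at hk'
    rw [hxdiv]
    rw [div_mul_eq_mul_div, div_le_one (by positivity)]
    nlinarith [pow_pos hr0 k]
  -- lower bound
  have hlow : 1 - (1 + δ) * x ≤ (deriv r s)^2 := by
    have h1 : r s ^ k * (1 - (deriv r s)^2) ≤ (1 + δ) * r0 ^ k := by
      have : (1/2 : ℝ) * r s ^ k * (1 - (deriv r s)^2) ≤ (1 + δ) * ((1/2) * r0 ^ k) := hFs_le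
      linarith
    have hrk : 0 < r s ^ k := by positivity
    have : 1 - (deriv r s)^2 ≤ (1 + δ) * x := by
      rw [hxdiv, ← mul_div_assoc, le_div_iff₀ hrk]
      nlinarith
    linarith
  clear_value x t
  clear hHD hderivF hmono hF0 hFs_ge hFs_le hF hsmooth hd2 hdd hdr hR hscal hmH hmass
    hrpos hdpos hrδk F
  have hmul : t * (x * (1 + t)) ≤ t * 1 := mul_le_mul_of_nonneg_left hxle ht0
  have e1 : (1 - t) * (1 - x) = 1 - t - x + t * x := by ring
  have e2 : 1 - (1 + δ) * x = 1 - x - δ * x := by ring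
  have e3 : δ * x = t * (x * t) := by rw [← ht2]; ring
  have e5 : t * (x * (1 + t)) = t * x + t * (x * t) := by ring
  have halg : (1 - t) * (1 - x) ≤ 1 - (1 + δ) * x := by linarith
  linarith
end

section
/- Inner-region metric estimate (vertical part of the precise near-equality theorem): Let n ≥ 3, let r be a profile with R(s) ≥ 0 for all s ≥ 0, and suppose m_H(s) ≤ (1+δ)·(1/2) r₀^{n−2} for all s, where 0 ≤ δ < 1. Set r_δ := (1+√δ)^{1/(n−2)} r₀. Then for every s ≥ 0 with r(s) ≤ r_δ, (1+δ)^{−1} ≤ ( 1 − r'(s)² )^{−1} ≤ 1 + √δ. (Equivalently, in vertical graphical coordinates the radial metric coefficient (ds/dz)² = 1/(1 − r'(s)²) is within these factors of that of the cylinder over the horizon sphere.) -/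
/-- Inner-region metric estimate.  For a profile with nonnegative
scalar curvature and `m_H(s) ≤ (1+δ)(1/2) r₀^{n-2}` for all `s ≥ 0` (where
`0 ≤ δ < 1`), setting `r_δ = (1+√δ)^{1/(n-2)} r₀`, one has for every `s ≥ 0`
with `r(s) ≤ r_δ`:
`(1+δ)⁻¹ ≤ (1 - r'(s)²)⁻¹ ≤ 1 + √δ`. -/
theorem inner_region_metric_estimate
    (n : ℕ) (hn : 3 ≤ n) (r : ℝ → ℝ) (r0 δ : ℝ)
    (hr0 : 0 < r0) (hr00 : r 0 = r0)
    (hsmooth : ContDiff ℝ (⊤ : ℕ∞) r)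
    (hrpos : ∀ s : ℝ, 0 ≤ s → 0 < r s)
    (hd0 : deriv r 0 = 0)
    (hdpos : ∀ s : ℝ, 0 < s → 0 < deriv r s)
    (mH R : ℝ → ℝ)
    (hmH : ∀ s : ℝ, mH s = (1 / 2) * r s ^ (n - 2) * (1 - (deriv r s) ^ 2))
    (hR : ∀ s : ℝ, R s = ((n : ℝ) - 1) / (r s) ^ 2 *
        (((n : ℝ) - 2) * (1 - (deriv r s) ^ 2) - 2 * r s * deriv (deriv r) s))
    (hscal : ∀ s : ℝ, 0 ≤ s → 0 ≤ R s)
    (hδ0 : 0 ≤ δ) (hδ1 : δ < 1)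
    (hmass : ∀ s : ℝ, 0 ≤ s → mH s ≤ (1 + δ) * ((1 / 2) * r0 ^ (n - 2)))
    (rδ : ℝ) (hrδ : rδ = (1 + Real.sqrt δ) ^ ((1 : ℝ) / ((n : ℝ) - 2)) * r0) :
    ∀ s : ℝ, 0 ≤ s → r s ≤ rδ →
      (1 + δ)⁻¹ ≤ (1 - (deriv r s) ^ 2)⁻¹ ∧
      (1 - (deriv r s) ^ 2)⁻¹ ≤ 1 + Real.sqrt δ := by
  intro s hs hrs
  have hd1 : Differentiable ℝ r := hsmooth.differentiable (by simp)
  have hsm : ContDiff ℝ ((⊤ : ℕ∞) : WithTop ℕ∞) r := hsmooth.of_le (by simp)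
  have hd2 : Differentiable ℝ (deriv r) :=
    ((contDiff_infty_iff_deriv.mp hsm).2).differentiable (by simp)
  set m := n - 2 with hm
  have hm1 : 1 ≤ m := by omega
  have hcast : ((m : ℕ) : ℝ) = (n : ℝ) - 2 := by
    have : ((m : ℕ) : ℝ) = ((n : ℕ) : ℝ) - ((2 : ℕ) : ℝ) := by
      rw [hm, Nat.cast_sub (by omega)]
    simpa using this
  set f : ℝ → ℝ := fun x => (1 / 2) * (r x ^ m * (1 - deriv r x ^ 2)) with hf
  have hderiv : ∀ x : ℝ, HasDerivAt f ((1 / 2) *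
      (((m : ℝ) * r x ^ (m - 1) * deriv r x) * (1 - deriv r x ^ 2) +
        r x ^ m * (0 - 2 * deriv r x ^ 1 * deriv (deriv r) x))) x := by
    intro x
    have h1 : HasDerivAt r (deriv r x) x := (hd1 x).hasDerivAt
    have h2 : HasDerivAt (deriv r) (deriv (deriv r) x) x := (hd2 x).hasDerivAt
    exact (((h1.pow m).mul ((hasDerivAt_const x (1 : ℝ)).sub (h2.pow 2)))).const_mul (1 / 2)
  have hfd : Differentiable ℝ f := fun x => (hderiv x).differentiableAt
  have hmono : MonotoneOn f (Set.Ici (0 : ℝ)) := by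
    apply monotoneOn_of_deriv_nonneg (convex_Ici 0) hfd.continuous.continuousOn
      (hfd.differentiableOn)
    intro x hx
    rw [interior_Ici] at hx
    have hx0 : (0 : ℝ) < x := hx
    have hrx : 0 < r x := hrpos x hx0.le
    have hA : 0 ≤ ((n : ℝ) - 2) * (1 - deriv r x ^ 2) - 2 * r x * deriv (deriv r) x := by
      have h := hscal x hx0.le
      rw [hR x] at h
      have hc : 0 < ((n : ℝ) - 1) / (r x) ^ 2 := by
        have h3 : (3 : ℝ) ≤ (n : ℝ) := by exact_mod_cast hn
        exact div_pos (by linarith) (pow_pos hrx 2)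
      nlinarith [h, hc, mul_pos hc hc]
    rw [(hderiv x).deriv]
    have hpowsplit : r x ^ m = r x ^ (m - 1) * r x := by
      rw [← pow_succ]
      congr 1
      omega
    have key : (1 / 2 : ℝ) *
        (((m : ℝ) * r x ^ (m - 1) * deriv r x) * (1 - deriv r x ^ 2) +
          r x ^ m * (0 - 2 * deriv r x ^ 1 * deriv (deriv r) x)) =
        (1 / 2) * deriv r x * r x ^ (m - 1) *
          (((n : ℝ) - 2) * (1 - deriv r x ^ 2) - 2 * r x * deriv (deriv r) x) := by
      rw [hpowsplit, hcast]; ring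
    rw [key]
    have hd : 0 ≤ deriv r x := (hdpos x hx0).le
    have hp : 0 ≤ r x ^ (m - 1) := pow_nonneg hrx.le _
    positivity
  have hkey : f 0 ≤ f s := hmono Set.self_mem_Ici hs hs
  have h0 : (1 / 2 : ℝ) * r0 ^ m ≤ (1 / 2) * (r s ^ m * (1 - deriv r s ^ 2)) := by
    have : f 0 = (1 / 2) * r0 ^ m := by simp [hf, hd0, hr00]
    rw [this] at hkey
    exact hkey
  have h0' : r0 ^ m ≤ r s ^ m * (1 - deriv r s ^ 2) := by linarith
  set u := 1 - deriv r s ^ 2 with hu'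
  have hrsm : 0 < r s ^ m := pow_pos (hrpos s hs) m
  have hr0m : 0 < r0 ^ m := pow_pos hr0 m
  have hu : 0 < u := by
    by_contra h
    push_neg at h
    have : r s ^ m * u ≤ 0 := mul_nonpos_of_nonneg_of_nonpos hrsm.le h
    linarith
  have hsq : 0 < 1 + Real.sqrt δ := by positivity
  have hne : ((n : ℝ) - 2) ≠ 0 := by
    have : (3 : ℝ) ≤ (n : ℝ) := by exact_mod_cast hn
    linarith
  have hrdm : rδ ^ m = (1 + Real.sqrt δ) * r0 ^ m := by
    rw [hrδ, mul_pow]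
    congr 1
    rw [← Real.rpow_natCast ((1 + Real.sqrt δ) ^ ((1 : ℝ) / ((n : ℝ) - 2))) m,
      ← Real.rpow_mul hsq.le, hcast, one_div, inv_mul_cancel₀ hne, Real.rpow_one]
  have hle : r s ^ m ≤ (1 + Real.sqrt δ) * r0 ^ m := by
    rw [← hrdm]
    exact pow_le_pow_left₀ (hrpos s hs).le hrs m
  have h1u : 1 ≤ (1 + Real.sqrt δ) * u := by
    have hmul : r s ^ m * u ≤ ((1 + Real.sqrt δ) * r0 ^ m) * u :=
      mul_le_mul_of_nonneg_right hle hu.le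
    have : r0 ^ m * 1 ≤ r0 ^ m * ((1 + Real.sqrt δ) * u) := by nlinarith
    exact le_of_mul_le_mul_left this hr0m
  have h2 : (1 + Real.sqrt δ)⁻¹ ≤ u := by
    rw [inv_eq_one_div, div_le_iff₀ hsq, mul_comm]
    linarith
  constructor
  · have hu1 : u ≤ 1 + δ := by nlinarith [sq_nonneg (deriv r s)]
    exact inv_anti₀ hu hu1
  · have := inv_anti₀ (by positivity) h2
    rwa [inv_inv] at this
end

section
/- Rigidity (equality case of the Penrose Inequality in rotational symmetry): Let n ≥ 3 and let r be a profile with R(s) ≥ 0 for all s ≥ 0 and with sup_{s≥0} m_H(s) = (1/2) r₀^{n−2}. Then m_H(s) = (1/2) r₀^{n−2} for all s ≥ 0 and r'(s)² = 1 − (r₀ / r(s))^{n−2} for all s ≥ 0; that is, the profile is exactly the Schwarzschild profile of mass m₀ = (1/2) r₀^{n−2} outside its outermost minimal hypersurface. -/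
/-- Rigidity (equality case of the Penrose Inequality in
rotational symmetry).  For a profile with nonnegative scalar curvature whose
ADM mass `sup_{s ≥ 0} m_H(s)` equals `(1/2) r₀^{n-2}`, the Hawking mass is
constantly `(1/2) r₀^{n-2}` and `r'(s)² = 1 - (r₀/r(s))^{n-2}` for all `s ≥ 0`,
i.e. the profile is the Schwarzschild profile of mass `m₀ = (1/2) r₀^{n-2}`. -/
theorem penrose_rigidity
    (n : ℕ) (hn : 3 ≤ n) (r : ℝ → ℝ) (r0 : ℝ)
    (hr0 : 0 < r0) (hr00 : r 0 = r0)
    (hsmooth : ContDiff ℝ (⊤ : ℕ∞) r)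
    (hrpos : ∀ s : ℝ, 0 ≤ s → 0 < r s)
    (hd0 : deriv r 0 = 0)
    (hdpos : ∀ s : ℝ, 0 < s → 0 < deriv r s)
    (mH R : ℝ → ℝ)
    (hmH : ∀ s : ℝ, mH s = (1 / 2) * r s ^ (n - 2) * (1 - (deriv r s) ^ 2))
    (hR : ∀ s : ℝ, R s = ((n : ℝ) - 1) / (r s) ^ 2 *
        (((n : ℝ) - 2) * (1 - (deriv r s) ^ 2) - 2 * r s * deriv (deriv r) s))
    (hscal : ∀ s : ℝ, 0 ≤ s → 0 ≤ R s)
    (hlub : IsLUB (mH '' Set.Ici (0 : ℝ)) ((1 / 2) * r0 ^ (n - 2))) :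
    ∀ s : ℝ, 0 ≤ s →
      mH s = (1 / 2) * r0 ^ (n - 2) ∧
      (deriv r s) ^ 2 = 1 - (r0 / r s) ^ (n - 2) := by
  have hdiff : Differentiable ℝ r := hsmooth.differentiable (by simp)
  have hsm' : ContDiff ℝ (⊤:ℕ∞) r := hsmooth.of_le (by simp)
  have hdiff2 : Differentiable ℝ (deriv r) :=
    ((contDiff_infty_iff_deriv.mp hsm').2).differentiable (by simp)
  set k := n - 2 with hk
  have hk1 : 1 ≤ k := by omega
  have hkc : (k : ℝ) = (n : ℝ) - 2 := by
    have h2 : (2:ℕ) ≤ n := by omega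
    rw [hk]; push_cast [Nat.cast_sub h2]; ring
  -- derivative of the Hawking mass formula
  have hD : ∀ t : ℝ, HasDerivAt mH
      ((1/2) * (r t ^ (k-1) * deriv r t) *
        (((n:ℝ)-2) * (1 - (deriv r t)^2) - 2 * r t * deriv (deriv r) t)) t := by
    intro t
    have h1 : HasDerivAt r (deriv r t) t := (hdiff t).hasDerivAt
    have h2 : HasDerivAt (deriv r) (deriv (deriv r) t) t := (hdiff2 t).hasDerivAt
    have h3 : HasDerivAt (fun u => (1/2 : ℝ) * r u ^ k)
        ((1/2 : ℝ) * ((k:ℝ) * r t ^ (k-1) * deriv r t)) t := by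
      exact ((h1.pow k).const_mul _)
    have h4 : HasDerivAt (fun u => 1 - (deriv r u)^2)
        (0 - (2:ℝ) * deriv r t ^ 1 * deriv (deriv r) t) t :=
      (hasDerivAt_const t (1:ℝ)).sub (h2.pow 2)
    have h5 := h3.mul h4
    have hpow : r t ^ (k-1) * r t = r t ^ k := by
      rw [← pow_succ]; congr 1; omega
    have heq : mH = fun u => (1/2 : ℝ) * r u ^ k * (1 - (deriv r u)^2) :=
      funext hmH
    rw [heq]
    refine h5.congr_deriv ?_
    rw [← hkc, ← hpow]; ring
  -- monotonicity
  have hmono : MonotoneOn mH (Set.Ici (0:ℝ)) := by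
    apply monotoneOn_of_deriv_nonneg (convex_Ici 0)
    · exact fun t _ => (hD t).continuousAt.continuousWithinAt
    · exact fun t _ => ((hD t).differentiableAt).differentiableWithinAt
    · intro t ht
      rw [interior_Ici] at ht
      have ht' : (0:ℝ) ≤ t := le_of_lt ht
      rw [(hD t).deriv]
      have hE : 0 ≤ ((n:ℝ)-2) * (1 - (deriv r t)^2) - 2 * r t * deriv (deriv r) t := by
        have hc : 0 < ((n:ℝ)-1) / (r t)^2 := by
          apply div_pos
          · have : (3:ℝ) ≤ (n:ℝ) := by exact_mod_cast hn
            linarith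
          · exact pow_pos (hrpos t ht') 2
        have hRt := hscal t ht'
        rw [hR t] at hRt
        by_contra h
        push_neg at h
        nlinarith [mul_neg_of_pos_of_neg hc h]
      have hd := (hdpos t ht).le
      have hp : (0:ℝ) ≤ r t ^ (k-1) := (pow_pos (hrpos t ht') _).le
      positivity
  intro s hs
  have hmH0 : mH 0 = (1/2) * r0 ^ k := by
    rw [hmH 0, hr00, hd0]; ring
  have hle : mH 0 ≤ mH s := hmono Set.self_mem_Ici hs hs
  have hub : mH s ≤ (1/2) * r0 ^ k := hlub.1 ⟨s, hs, rfl⟩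
  have hconst : mH s = (1/2) * r0 ^ k := le_antisymm hub (hmH0 ▸ hle)
  refine ⟨hconst, ?_⟩
  have h := (hmH s).symm.trans hconst
  have hrs : r s ≠ 0 := (hrpos s hs).ne'
  rw [div_pow]
  field_simp
  nlinarith [h, pow_pos (hrpos s hs) k]
end

section
/- Scalar curvature along solutions of the Hawking-mass ODE: Let n ≥ 3, let I ⊆ ℝ be an open interval, let r : I → ℝ be smooth with r(s) > 0 and r'(s) > 0 for all s ∈ I, let J := r(I), and let m : J → ℝ be smooth with 2 m(ρ) < ρ^{n−2} for all ρ ∈ J. If r'(s) = √( 1 − 2 m(r(s)) · r(s)^{2−n} ) for all s ∈ I, then for all s ∈ I: m_H(s) = m(r(s)) and R(s) = 2(n−1) · m'(r(s)) · r(s)^{1−n}. In particular, if m is nondecreasing then R(s) ≥ 0 on I. -/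
/-- Scalar curvature along solutions of the Hawking-mass ODE.
If `r` is a smooth positive increasing solution of
`r' = √(1 - 2 m(r) r^{2-n})` on an open interval `I`, with `m` smooth on
`J = r(I)` and `2 m(ρ) < ρ^{n-2}` on `J`, then `m_H(s) = m(r(s))` and
`R(s) = 2(n-1) m'(r(s)) r(s)^{1-n}` on `I`; in particular `R ≥ 0` when `m` is
nondecreasing. -/
theorem scalar_curvature_along_ode_solutions
    (n : ℕ) (hn : 3 ≤ n) (I : Set ℝ) (hI : IsOpen I) (hI' : I.OrdConnected)
    (r : ℝ → ℝ) (hr_smooth : ContDiffOn ℝ (⊤ : ℕ∞) r I)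
    (hrpos : ∀ s ∈ I, 0 < r s) (hdpos : ∀ s ∈ I, 0 < deriv r s)
    (J : Set ℝ) (hJ : J = r '' I)
    (m : ℝ → ℝ) (hm_smooth : ContDiffOn ℝ (⊤ : ℕ∞) m J)
    (hm_lt : ∀ ρ ∈ J, 2 * m ρ < ρ ^ (n - 2))
    (hode : ∀ s ∈ I,
      deriv r s = Real.sqrt (1 - 2 * m (r s) * r s ^ ((2 : ℝ) - (n : ℝ)))) :
    (∀ s ∈ I,
      (1 / 2) * r s ^ (n - 2) * (1 - (deriv r s) ^ 2) = m (r s)) ∧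
    (∀ s ∈ I,
      ((n : ℝ) - 1) / (r s) ^ 2 *
          (((n : ℝ) - 2) * (1 - (deriv r s) ^ 2) - 2 * r s * deriv (deriv r) s)
        = 2 * ((n : ℝ) - 1) * deriv m (r s) * r s ^ ((1 : ℝ) - (n : ℝ))) ∧
    (MonotoneOn m J → ∀ s ∈ I,
      0 ≤ ((n : ℝ) - 1) / (r s) ^ 2 *
        (((n : ℝ) - 2) * (1 - (deriv r s) ^ 2) -
          2 * r s * deriv (deriv r) s)) := by
  have hIconv : Convex ℝ I := hI'.convex
  have hrI : ∀ s ∈ I, r s ∈ J := fun s hs => hJ ▸ Set.mem_image_of_mem r hs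
  have hnc : ((n - 2 : ℕ) : ℝ) = (n : ℝ) - 2 := by
    have : (2 : ℕ) ≤ n := by omega
    push_cast [Nat.cast_sub this]; ring
  have hpow : ∀ ρ : ℝ, (ρ ^ (n - 2) : ℝ) = ρ ^ ((n : ℝ) - 2) := fun ρ => by
    rw [← Real.rpow_natCast ρ (n - 2), hnc]
  have hmul1 : ∀ ρ : ℝ, 0 < ρ → ρ ^ ((n : ℝ) - 2) * ρ ^ ((2 : ℝ) - (n : ℝ)) = 1 := by
    intro ρ hρ
    rw [← Real.rpow_add hρ]
    norm_num
  have hkey : ∀ s ∈ I, 0 < 1 - 2 * m (r s) * r s ^ ((2 : ℝ) - (n : ℝ)) := by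
    intro s hs
    have h1 : 0 < r s := hrpos s hs
    have h2 := hm_lt _ (hrI s hs)
    rw [hpow] at h2
    have hu : 0 < r s ^ ((2 : ℝ) - (n : ℝ)) := Real.rpow_pos_of_pos h1 _
    have h3 := hmul1 _ h1
    nlinarith [mul_lt_mul_of_pos_right h2 hu]
  have hsq : ∀ s ∈ I, (deriv r s) ^ 2 = 1 - 2 * m (r s) * r s ^ ((2 : ℝ) - (n : ℝ)) := by
    intro s hs
    rw [hode s hs, Real.sq_sqrt (hkey s hs).le]
  -- part 1
  have part1 : ∀ s ∈ I,
      (1 / 2) * r s ^ (n - 2) * (1 - (deriv r s) ^ 2) = m (r s) := by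
    intro s hs
    rw [hsq s hs, hpow]
    linear_combination m (r s) * hmul1 _ (hrpos s hs)
  -- strict monotone and openness of J
  have hmono : StrictMonoOn r I :=
    strictMonoOn_of_deriv_pos hIconv hr_smooth.continuousOn
      (by rw [hI.interior_eq]; exact hdpos)
  have hJord : J.OrdConnected := by
    rw [hJ]
    exact (hIconv.isPreconnected.image r hr_smooth.continuousOn).ordConnected
  have hJopen : IsOpen J := by
    rw [isOpen_iff_mem_nhds]
    intro x hx
    rw [hJ] at hx
    obtain ⟨s, hs, rfl⟩ := hx
    obtain ⟨ε, hε, hball⟩ := Metric.isOpen_iff.1 hI s hs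
    have h1 : s - ε / 2 ∈ I := hball (by
      simp [Real.dist_eq]
      rw [abs_of_nonneg hε.le]; linarith)
    have h2 : s + ε / 2 ∈ I := hball (by simp [Real.dist_eq, abs_of_nonneg hε.le]; linarith)
    have hlt1 : r (s - ε / 2) < r s := hmono h1 hs (by linarith)
    have hlt2 : r s < r (s + ε / 2) := hmono hs h2 (by linarith)
    exact Filter.mem_of_superset (Ioo_mem_nhds hlt1 hlt2)
      ((Set.Ioo_subset_Icc_self).trans (hJord.out (hrI _ h1) (hrI _ h2)))
  have hrd : ∀ s ∈ I, HasDerivAt r (deriv r s) s := fun s hs =>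
    ((hr_smooth.contDiffAt (hI.mem_nhds hs)).differentiableAt (by simp)).hasDerivAt
  have hmd : ∀ ρ ∈ J, HasDerivAt m (deriv m ρ) ρ := fun ρ hρ =>
    ((hm_smooth.contDiffAt (hJopen.mem_nhds hρ)).differentiableAt (by simp)).hasDerivAt
  -- part 2
  have part2 : ∀ s ∈ I,
      ((n : ℝ) - 1) / (r s) ^ 2 *
          (((n : ℝ) - 2) * (1 - (deriv r s) ^ 2) - 2 * r s * deriv (deriv r) s)
        = 2 * ((n : ℝ) - 1) * deriv m (r s) * r s ^ ((1 : ℝ) - (n : ℝ)) := by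
    intro s hs
    have hR : 0 < r s := hrpos s hs
    have hu0 : 0 < r s ^ ((2 : ℝ) - (n : ℝ)) := Real.rpow_pos_of_pos hR _
    have hrd0 : 0 < deriv r s := hdpos s hs
    have hmr : HasDerivAt (fun t => m (r t)) (deriv m (r s) * deriv r s) s :=
      (hmd _ (hrI s hs)).comp s (hrd s hs)
    have hpw : HasDerivAt (fun t => r t ^ ((2 : ℝ) - (n : ℝ)))
        (((2 : ℝ) - (n : ℝ)) * r s ^ ((2 : ℝ) - (n : ℝ) - 1) * deriv r s) s := by
      have := (hrd s hs).rpow_const (p := (2 : ℝ) - (n : ℝ)) (Or.inl hR.ne')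
      convert this using 1
      ring
    have hφ : HasDerivAt (fun t => 1 - 2 * m (r t) * r t ^ ((2 : ℝ) - (n : ℝ)))
        (-(2 * ((deriv m (r s) * deriv r s) * r s ^ ((2 : ℝ) - (n : ℝ)) +
          m (r s) * (((2 : ℝ) - (n : ℝ)) * r s ^ ((2 : ℝ) - (n : ℝ) - 1) * deriv r s)))) s := by
      have := HasDerivAt.const_sub (1 : ℝ) ((hmr.mul hpw).const_mul 2)
      convert this using 1
      · rfl
      · rfl
      ext t; simp only [Pi.mul_apply]; ring
    have hg := hφ.sqrt (hkey s hs).ne'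
    have heq : deriv r =ᶠ[nhds s] fun t =>
        Real.sqrt (1 - 2 * m (r t) * r t ^ ((2 : ℝ) - (n : ℝ))) :=
      Filter.eventuallyEq_of_mem (hI.mem_nhds hs) hode
    have h2d : deriv (deriv r) s =
        (-(2 * ((deriv m (r s) * deriv r s) * r s ^ ((2 : ℝ) - (n : ℝ)) +
          m (r s) * (((2 : ℝ) - (n : ℝ)) * r s ^ ((2 : ℝ) - (n : ℝ) - 1) * deriv r s)))) /
          (2 * Real.sqrt (1 - 2 * m (r s) * r s ^ ((2 : ℝ) - (n : ℝ)))) := by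
      rw [heq.deriv_eq]; exact hg.deriv
    rw [← hode s hs] at h2d
    have hc1 : r s ^ ((2 : ℝ) - (n : ℝ) - 1) = r s ^ ((2 : ℝ) - (n : ℝ)) / r s := by
      rw [Real.rpow_sub hR, Real.rpow_one]
    have hln : r s ^ ((1 : ℝ) - (n : ℝ)) = r s ^ ((2 : ℝ) - (n : ℝ)) / r s := by
      rw [← hc1]; congr 1; ring
    rw [h2d, hsq s hs, hc1, hln]
    field_simp
    ring
  refine ⟨part1, part2, ?_⟩
  -- part 3
  intro hmono' s hs
  rw [part2 s hs]
  have hdm0 : 0 ≤ deriv m (r s) := by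
    have hρ := hrI s hs
    have hd := hasDerivAt_iff_tendsto_slope.1 (hmd _ hρ)
    refine ge_of_tendsto hd ?_
    refine Filter.eventually_iff_exists_mem.2 ⟨J ∩ {(r s)}ᶜ,
      Filter.inter_mem (nhdsWithin_le_nhds (hJopen.mem_nhds hρ)) self_mem_nhdsWithin, ?_⟩
    rintro y ⟨hy, hne⟩
    have hne' : y ≠ r s := hne
    rw [slope_def_field]
    rcases lt_or_gt_of_ne hne' with h | h
    · refine div_nonneg_iff.2 (Or.inr ⟨?_, ?_⟩)
      · simpa using hmono' hy hρ h.le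
      · linarith
    · apply div_nonneg
      · simpa using hmono' hρ hy h.le
      · linarith
  have hp : (0:ℝ) < r s ^ ((1 : ℝ) - (n : ℝ)) := Real.rpow_pos_of_pos (hrpos s hs) _
  have hn1 : (0:ℝ) ≤ (n : ℝ) - 1 := by
    have : (3:ℝ) ≤ n := by exact_mod_cast hn
    linarith
  positivity
end

section
/- Deep-well example (near-equality with arbitrarily large depth): Let n ≥ 3 and let 0 < r₀ < r₁. For every L > 0 and every δ > 0 there exists a smooth nondecreasing function m : [r₀, ∞) → ℝ with m(r₀) = (1/2) r₀^{n−2}, 2 m(ρ) < ρ^{n−2} for all ρ > r₀, and sup_{ρ ≥ r₀} m(ρ) ≤ (1+δ)·(1/2) r₀^{n−2}, such that the improper integral ∫_{r₀}^{r₁} ( 1 − 2 m(ρ) ρ^{2−n} )^{−1/2} dρ is finite and strictly greater than L. (In the corresponding manifold M ∈ RotSym∂_n, the boundary has area ω_{n−1} r₀^{n−1}, the ADM mass is at most (1+δ)/2 · (|∂M|/ω_{n−1})^{(n−2)/(n−1)}, and the distance from ∂M to the symmetric sphere of area ω_{n−1} r₁^{n−1} exceeds L.) -/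
open MeasureTheory intervalIntegral

lemma rpow_neg_half_nonneg (x : ℝ) : 0 ≤ x ^ (-(1/2 : ℝ)) := by
  rcases lt_trichotomy x 0 with h|h|h
  · rw [Real.rpow_def_of_neg h, show (-(1/2:ℝ)) * Real.pi = -(Real.pi/2) by ring]
    rw [Real.cos_neg, Real.cos_pi_div_two, mul_zero]
  · subst h; rw [Real.zero_rpow (by norm_num)]
  · exact Real.rpow_nonneg h.le _

lemma inv_le_rpow_neg_half {x y : ℝ} (hx : 0 < x) (hy : 0 < y) (h : x ≤ y ^ 2) :
    y⁻¹ ≤ x ^ (-(1/2 : ℝ)) := by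
  have h2 : (y ^ 2 : ℝ) ^ (-(1/2 : ℝ)) = y⁻¹ := by
    rw [← Real.rpow_natCast y 2, ← Real.rpow_mul hy.le,
      show ((2:ℕ):ℝ) * (-(1/2:ℝ)) = -1 by norm_num, Real.rpow_neg_one]
  calc y⁻¹ = (y ^ 2) ^ (-(1/2 : ℝ)) := h2.symm
    _ ≤ x ^ (-(1/2 : ℝ)) := Real.rpow_le_rpow_of_nonpos hx h (by norm_num)

lemma pow_tangent_lower (x t : ℝ) (hx : 0 < x) (ht : 0 ≤ t) (i : ℕ) :
    x ^ (i+1) + ((i:ℝ)+1) * x ^ i * t ≤ (x + t) ^ (i+1) := by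
  induction i with
  | zero => simp
  | succ j ih =>
    have hxt : (0:ℝ) ≤ x + t := by linarith
    have ih2 := mul_le_mul_of_nonneg_right ih hxt
    have h1 : 0 ≤ (((j:ℝ))+1) * x ^ j * (t*t) :=
      mul_nonneg (mul_nonneg (by positivity) (pow_nonneg hx.le j)) (mul_nonneg ht ht)
    push_cast
    simp only [pow_succ] at ih2 ⊢
    nlinarith [ih2, h1]

lemma pow_tangent_upper (x t R : ℝ) (hx : 0 < x) (ht : 0 ≤ t) (hR : x + t ≤ R) (i : ℕ) :
    (x + t) ^ (i+1) * x ^ 2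
      ≤ (x ^ (i+1) + ((i:ℝ)+1) * x ^ i * t) * x ^ 2 + ((i:ℝ)+1)^2 * R ^ (i+1) * t ^ 2 := by
  have hR0 : 0 < R := by nlinarith
  induction i with
  | zero =>
    simp only [pow_succ, pow_zero]
    push_cast
    nlinarith [mul_nonneg hR0.le (sq_nonneg t)]
  | succ j ih =>
    have hxt : (0:ℝ) ≤ x + t := by linarith
    have hxR : x ≤ R := by linarith
    have ih2 := mul_le_mul_of_nonneg_right ih hxt
    have e1 : x ^ j * x ^ 2 ≤ R ^ j * R ^ 2 :=
      mul_le_mul (pow_le_pow_left₀ hx.le hxR j) (pow_le_pow_left₀ hx.le hxR 2)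
        (sq_nonneg x) (pow_nonneg hR0.le j)
    have e2 : R ^ j * R * (x + t) ≤ R ^ j * R * R :=
      mul_le_mul_of_nonneg_left hR (mul_nonneg (pow_nonneg hR0.le j) hR0.le)
    have H1 := mul_le_mul_of_nonneg_left (mul_le_mul_of_nonneg_right e1 (sq_nonneg t))
      (show (0:ℝ) ≤ (j:ℝ)+1 by positivity)
    have H2 := mul_le_mul_of_nonneg_left (mul_le_mul_of_nonneg_right e2 (sq_nonneg t))
      (show (0:ℝ) ≤ ((j:ℝ)+1)^2 by positivity)
    have H3 : 0 ≤ ((j:ℝ)+2) * (R ^ j * R ^ 2 * t ^ 2) :=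
      mul_nonneg (by positivity)
        (mul_nonneg (mul_nonneg (pow_nonneg hR0.le j) (sq_nonneg R)) (sq_nonneg t))
    push_cast
    simp only [pow_succ] at ih2 ⊢
    nlinarith [ih2, H1, H2, H3]

set_option maxHeartbeats 4000000 in
/-- Deep-well example (near-equality with arbitrarily large
depth).  For `n ≥ 3`, `0 < r₀ < r₁`, any `L > 0` and any `δ > 0`, there is a
smooth nondecreasing admissible Hawking mass function `m` on `[r₀,∞)` with
`m(r₀) = (1/2) r₀^{n-2}`, `2m(ρ) < ρ^{n-2}` for `ρ > r₀`, and
`sup m ≤ (1+δ)(1/2) r₀^{n-2}`, such that the distance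
`∫_{r₀}^{r₁} (1 - 2 m(ρ) ρ^{2-n})^{-1/2} dρ` from the boundary to the symmetric
sphere of radius `r₁` is finite and exceeds `L`. -/
theorem deep_well_example
    (n : ℕ) (hn : 3 ≤ n) (r0 r1 : ℝ) (hr0 : 0 < r0) (hr01 : r0 < r1)
    (L δ : ℝ) (hL : 0 < L) (hδ : 0 < δ) :
    ∃ m : ℝ → ℝ,
      ContDiffOn ℝ (⊤ : ℕ∞) m (Set.Ici r0) ∧
      MonotoneOn m (Set.Ici r0) ∧
      m r0 = (1 / 2) * r0 ^ (n - 2) ∧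
      (∀ ρ : ℝ, r0 < ρ → 2 * m ρ < ρ ^ (n - 2)) ∧
      (∀ ρ : ℝ, r0 ≤ ρ → m ρ ≤ (1 + δ) * ((1 / 2) * r0 ^ (n - 2))) ∧
      IntervalIntegrable
        (fun ρ : ℝ => (1 - 2 * m ρ * ρ ^ ((2 : ℝ) - (n : ℝ))) ^ (-(1 / 2) : ℝ))
        volume r0 r1 ∧
      L < ∫ ρ in r0..r1,
            (1 - 2 * m ρ * ρ ^ ((2 : ℝ) - (n : ℝ))) ^ (-(1 / 2) : ℝ) := by
  obtain ⟨i, rfl⟩ : ∃ i, n = i + 3 := ⟨n - 3, by omega⟩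
  have hnk : i + 3 - 2 = i + 1 := rfl
  have hr0k : (0:ℝ) < r0 ^ (i+1) := pow_pos hr0 _
  have hr0i : (0:ℝ) < r0 ^ i := pow_pos hr0 _
  -- opaque constants
  obtain ⟨D, hDdef⟩ : ∃ D : ℝ, D = δ * r0 ^ (i+1) := ⟨_, rfl⟩
  have hD : 0 < D := by rw [hDdef]; positivity
  obtain ⟨C₁, hC₁def⟩ : ∃ C₁ : ℝ, C₁ = ((i:ℝ)+1) * r0 ^ i + ((i:ℝ)+1)^2 * r1 ^ (i+1) / r0 ^ 2
      + (((i:ℝ)+1) * r0 ^ i)^2 / D := ⟨_, rfl⟩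
  have hr1k : (0:ℝ) < r1 ^ (i+1) := pow_pos (lt_trans hr0 hr01) _
  have hC₁ : 0 < C₁ := by
    rw [hC₁def]
    have h1 : 0 < ((i:ℝ)+1) * r0 ^ i := by positivity
    have h2 : 0 ≤ ((i:ℝ)+1)^2 * r1 ^ (i+1) / r0 ^ 2 := by positivity
    have h3 : 0 ≤ (((i:ℝ)+1) * r0 ^ i)^2 / D := by positivity
    linarith
  obtain ⟨c₅, hc₅def⟩ : ∃ c₅ : ℝ, c₅ = Real.sqrt (r0 ^ (i+1) / C₁) := ⟨_, rfl⟩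
  have hc₅ : 0 < c₅ := by rw [hc₅def]; exact Real.sqrt_pos.mpr (div_pos hr0k hC₁)
  have hc₅sq : c₅ ^ 2 = r0 ^ (i+1) / C₁ := by
    rw [hc₅def]; exact Real.sq_sqrt (div_pos hr0k hC₁).le
  obtain ⟨σ, hσdef⟩ : ∃ σ : ℝ,
      σ = min ((r1-r0)/2) (min 1 ((r1 - r0) * Real.exp (-((L+1)/c₅)))) := ⟨_, rfl⟩
  have hσ0 : 0 < σ := by
    rw [hσdef]
    exact lt_min (by linarith) (lt_min one_pos (mul_pos (by linarith) (Real.exp_pos _)))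
  have hσhalf : σ ≤ (r1-r0)/2 := hσdef ▸ min_le_left _ _
  have hσ1 : σ ≤ 1 := hσdef ▸ (min_le_right _ _).trans (min_le_left _ _)
  have hσexp : σ ≤ (r1 - r0) * Real.exp (-((L+1)/c₅)) :=
    hσdef ▸ (min_le_right _ _).trans (min_le_right _ _)
  have hσr1 : r0 + σ ≤ r1 := by linarith
  obtain ⟨ε, hεdef⟩ : ∃ ε : ℝ, ε = σ ^ 2 := ⟨_, rfl⟩
  have hε0 : 0 < ε := by rw [hεdef]; positivity
  have hε1 : ε ≤ 1 := by rw [hεdef]; exact pow_le_one₀ hσ0.le hσ1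
  obtain ⟨K, hKdef⟩ : ∃ K : ℝ, K = ((i:ℝ)+1) * (1-ε) * r0 ^ i := ⟨_, rfl⟩
  have hK0 : 0 ≤ K := by
    rw [hKdef]
    exact mul_nonneg (mul_nonneg (by positivity) (by linarith)) hr0i.le
  -- the mass function
  set m : ℝ → ℝ := fun ρ => (1/2) * (r0 ^ (i+1) + D * K * (ρ - r0) / (D + K * (ρ - r0)))
    with hmdef
  have hden : ∀ ρ, r0 ≤ ρ → 0 < D + K * (ρ - r0) := by
    intro ρ hρ
    have : 0 ≤ K * (ρ - r0) := mul_nonneg hK0 (by linarith)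
    linarith
  have h2m : ∀ ρ, 2 * m ρ = r0 ^ (i+1) + D * K * (ρ - r0) / (D + K * (ρ - r0)) := by
    intro ρ; simp only [hmdef]; ring
  -- bounds on the saturation term s = D K t / (D + K t)
  have hs0 : ∀ ρ, r0 ≤ ρ → 0 ≤ D * K * (ρ - r0) / (D + K * (ρ - r0)) := by
    intro ρ hρ
    exact div_nonneg (mul_nonneg (mul_nonneg hD.le hK0) (by linarith)) (hden ρ hρ).le
  have hsD : ∀ ρ, r0 ≤ ρ → D * K * (ρ - r0) / (D + K * (ρ - r0)) ≤ D := by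
    intro ρ hρ
    rw [div_le_iff₀ (hden ρ hρ)]
    have h1 : 0 ≤ K * (ρ - r0) := mul_nonneg hK0 (by linarith)
    rw [show D * K * (ρ - r0) = D * (K * (ρ - r0)) by ring,
      show D * (D + K * (ρ - r0)) = D * D + D * (K * (ρ - r0)) by ring]
    exact le_add_of_nonneg_left (mul_pos hD hD).le
  have hsKt : ∀ ρ, r0 ≤ ρ → D * K * (ρ - r0) / (D + K * (ρ - r0)) ≤ K * (ρ - r0) := by
    intro ρ hρ
    rw [div_le_iff₀ (hden ρ hρ)]
    have h1 : 0 ≤ K * (ρ - r0) := mul_nonneg hK0 (by linarith)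
    rw [show K * (ρ - r0) * (D + K * (ρ - r0))
        = D * K * (ρ - r0) + K * (ρ - r0) * (K * (ρ - r0)) by ring]
    exact le_add_of_nonneg_right (mul_nonneg h1 h1)
  have hslow : ∀ ρ, r0 ≤ ρ →
      K * (ρ - r0) - K^2 * (ρ - r0)^2 / D ≤ D * K * (ρ - r0) / (D + K * (ρ - r0)) := by
    intro ρ hρ
    rw [le_div_iff₀ (hden ρ hρ)]
    have hq0 : 0 ≤ K^2 * (ρ - r0)^2 / D := by positivity
    have ht0 : 0 ≤ K * (ρ - r0) := mul_nonneg hK0 (by linarith)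
    rw [show (K * (ρ - r0) - K^2 * (ρ - r0)^2 / D) * (D + K * (ρ - r0))
        = D * (K * (ρ - r0)) - (K^2 * (ρ - r0)^2 / D) * (K * (ρ - r0))
          + (K^2 * (ρ - r0)^2 - K^2 * (ρ - r0)^2 / D * D) by ring,
      div_mul_cancel₀ _ hD.ne', sub_self, add_zero,
      show D * K * (ρ - r0) = D * (K * (ρ - r0)) by ring]
    exact sub_le_self _ (mul_nonneg hq0 ht0)
  -- lower tangent bound
  have hlowP : ∀ ρ, r0 ≤ ρ →
      r0 ^ (i+1) + ((i:ℝ)+1) * r0 ^ i * (ρ - r0) ≤ ρ ^ (i+1) := by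
    intro ρ hρ
    have h := pow_tangent_lower r0 (ρ - r0) hr0 (by linarith) i
    rwa [show r0 + (ρ - r0) = ρ by ring] at h
  -- key numerator lower bound
  have hnum : ∀ ρ, r0 ≤ ρ →
      ((i:ℝ)+1) * r0 ^ i * ε * (ρ - r0) ≤ ρ ^ (i+1) - 2 * m ρ := by
    intro ρ hρ
    have h1 := hlowP ρ hρ
    have h2 := hsKt ρ hρ
    have h3 : K * (ρ - r0)
        = ((i:ℝ)+1) * r0 ^ i * (ρ - r0) - ((i:ℝ)+1) * r0 ^ i * ε * (ρ - r0) := by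
      rw [hKdef]; ring
    rw [h2m]
    linarith
  have hnum_pos : ∀ ρ, r0 < ρ → 0 < ρ ^ (i+1) - 2 * m ρ := by
    intro ρ hρ
    refine lt_of_lt_of_le ?_ (hnum ρ hρ.le)
    have h : 0 < ρ - r0 := by linarith
    positivity
  -- rewriting the integrand
  have hcast : ((2:ℝ) - ((i+3 : ℕ):ℝ)) = -(((i+1 : ℕ)):ℝ) := by push_cast; ring
  have hphi : ∀ ρ, r0 ≤ ρ →
      1 - 2 * m ρ * ρ ^ ((2:ℝ) - ((i+3 : ℕ):ℝ)) = (ρ ^ (i+1) - 2 * m ρ) / ρ ^ (i+1) := by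
    intro ρ hρ
    have hρ0 : (0:ℝ) < ρ := lt_of_lt_of_le hr0 hρ
    have hρk : (0:ℝ) < ρ ^ (i+1) := pow_pos hρ0 _
    rw [hcast, Real.rpow_neg hρ0.le, Real.rpow_natCast]
    field_simp
  have hphi_pos : ∀ ρ, r0 < ρ → 0 < 1 - 2 * m ρ * ρ ^ ((2:ℝ) - ((i+3 : ℕ):ℝ)) := by
    intro ρ h
    rw [hphi ρ h.le]
    exact div_pos (hnum_pos ρ h) (pow_pos (hr0.trans h) _)
  obtain ⟨c₄, hc₄def⟩ : ∃ c₄ : ℝ, c₄ = ((i:ℝ)+1) * r0 ^ i * ε / r1 ^ (i+1) := ⟨_, rfl⟩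
  have hc₄pos : 0 < c₄ := by
    rw [hc₄def]; exact div_pos (by positivity) hr1k
  have hlowφ : ∀ ρ ∈ Set.Ioc r0 r1,
      c₄ * (ρ - r0) ≤ 1 - 2 * m ρ * ρ ^ ((2:ℝ) - ((i+3 : ℕ):ℝ)) := by
    intro ρ hρ
    rw [hphi ρ hρ.1.le, le_div_iff₀ (pow_pos (hr0.trans hρ.1) _)]
    have h1 : ρ ^ (i+1) ≤ r1 ^ (i+1) := pow_le_pow_left₀ (by linarith [hρ.1]) hρ.2 _
    have h2 : c₄ * r1 ^ (i+1) = ((i:ℝ)+1) * r0 ^ i * ε := by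
      rw [hc₄def]; field_simp
    have h3 := hnum ρ hρ.1.le
    have ht0 : 0 ≤ ρ - r0 := by linarith [hρ.1]
    calc c₄ * (ρ - r0) * ρ ^ (i+1) ≤ c₄ * (ρ - r0) * r1 ^ (i+1) :=
          mul_le_mul_of_nonneg_left h1 (mul_nonneg hc₄pos.le ht0)
      _ = ((i:ℝ)+1) * r0 ^ i * ε * (ρ - r0) := by
          rw [show c₄ * (ρ - r0) * r1 ^ (i+1) = c₄ * r1 ^ (i+1) * (ρ - r0) by ring, h2]
      _ ≤ ρ ^ (i+1) - 2 * m ρ := h3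
  have hupφ : ∀ ρ ∈ Set.Icc (r0+σ) r1,
      1 - 2 * m ρ * ρ ^ ((2:ℝ) - ((i+3 : ℕ):ℝ)) ≤ ((ρ - r0)/c₅)^2 := by
    intro ρ hρ
    have hρr0 : r0 < ρ := lt_of_lt_of_le (by linarith) hρ.1
    have ht : σ ≤ ρ - r0 := by linarith [hρ.1]
    have ht0 : 0 < ρ - r0 := lt_of_lt_of_le hσ0 ht
    rw [hphi ρ hρr0.le]
    have hρk : 0 < ρ ^ (i+1) := pow_pos (hr0.trans hρr0) _
    have hup1 : ρ^(i+1) * r0^2 ≤ (r0^(i+1) + ((i:ℝ)+1) * r0^i * (ρ-r0)) * r0^2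
        + ((i:ℝ)+1)^2 * r1^(i+1) * (ρ-r0)^2 := by
      have h := pow_tangent_upper r0 (ρ-r0) r1 hr0 ht0.le
        (by rw [show r0 + (ρ-r0) = ρ by ring]; exact hρ.2) i
      rwa [show r0 + (ρ-r0) = ρ by ring] at h
    have hr02 : (0:ℝ) < r0^2 := by positivity
    have hup2 : ρ^(i+1) ≤ r0^(i+1) + ((i:ℝ)+1) * r0^i * (ρ-r0)
        + ((i:ℝ)+1)^2 * r1^(i+1) / r0^2 * (ρ-r0)^2 := by
      have hdd := (div_le_div_iff_of_pos_right hr02).mpr hup1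
      rw [mul_div_assoc, div_self hr02.ne', mul_one] at hdd
      have he : ((r0^(i+1) + ((i:ℝ)+1) * r0^i * (ρ-r0)) * r0^2
            + ((i:ℝ)+1)^2 * r1^(i+1) * (ρ-r0)^2) / r0^2
          = r0^(i+1) + ((i:ℝ)+1) * r0^i * (ρ-r0)
            + ((i:ℝ)+1)^2 * r1^(i+1) / r0^2 * (ρ-r0)^2 := by
        field_simp
        try ring
      linarith only [he.le, he.ge, hdd]
    have hlo := hslow ρ hρr0.le
    have h2mρ := h2m ρ
    have h3 : K * (ρ - r0)
        = ((i:ℝ)+1) * r0 ^ i * (ρ - r0) - ((i:ℝ)+1) * r0 ^ i * ε * (ρ - r0) := by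
      rw [hKdef]; ring
    have hq : K^2 * (ρ-r0)^2 / D = K^2/D * (ρ-r0)^2 := by ring
    have e1 : ρ^(i+1) - 2 * m ρ ≤ ((i:ℝ)+1) * r0^i * ε * (ρ-r0)
        + (((i:ℝ)+1)^2 * r1^(i+1) / r0^2 + K^2/D) * (ρ-r0)^2 := by
      linarith only [hup2, h2mρ, hlo, h3, hq.le, hq.ge]
    have hεt : ε * (ρ - r0) ≤ (ρ-r0)^2 := by
      have hσ2 : σ^2 ≤ σ := by
        calc σ^2 = σ*σ := sq σ
          _ ≤ σ*1 := mul_le_mul_of_nonneg_left hσ1 hσ0.le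
          _ = σ := mul_one σ
      have h1 : ε*(ρ-r0) ≤ σ*(ρ-r0) := by
        rw [hεdef]; exact mul_le_mul_of_nonneg_right hσ2 ht0.le
      have h2 : σ*(ρ-r0) ≤ (ρ-r0)*(ρ-r0) := mul_le_mul_of_nonneg_right ht ht0.le
      have h3 : (ρ-r0)^2 = (ρ-r0)*(ρ-r0) := by ring
      linarith only [h1, h2, h3.le, h3.ge]
    have e2 : ((i:ℝ)+1) * r0^i * ε * (ρ-r0) ≤ ((i:ℝ)+1) * r0^i * (ρ-r0)^2 := by
      have h0 : (0:ℝ) ≤ ((i:ℝ)+1) * r0^i := by positivity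
      calc ((i:ℝ)+1) * r0^i * ε * (ρ-r0) = ((i:ℝ)+1) * r0^i * (ε * (ρ-r0)) := by ring
        _ ≤ ((i:ℝ)+1) * r0^i * (ρ-r0)^2 := mul_le_mul_of_nonneg_left hεt h0
    have hK2 : K^2 ≤ (((i:ℝ)+1) * r0^i)^2 := by
      rw [hKdef]
      have h1 : (1-ε)^2 ≤ 1 := pow_le_one₀ (by linarith) (by linarith)
      calc (((i:ℝ)+1) * (1-ε) * r0^i)^2 = (((i:ℝ)+1) * r0^i)^2 * (1-ε)^2 := by ring
        _ ≤ (((i:ℝ)+1) * r0^i)^2 * 1 := mul_le_mul_of_nonneg_left h1 (sq_nonneg _)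
        _ = (((i:ℝ)+1) * r0^i)^2 := by ring
    have e3 : K^2/D ≤ (((i:ℝ)+1) * r0^i)^2/D := by
      exact (div_le_div_iff_of_pos_right hD).mpr hK2
    have hnum_up : ρ^(i+1) - 2 * m ρ ≤ C₁ * (ρ-r0)^2 := by
      rw [hC₁def]
      have e4 := mul_le_mul_of_nonneg_right e3 (sq_nonneg (ρ-r0))
      have e5 : (((i:ℝ)+1)^2 * r1^(i+1) / r0^2 + K^2/D) * (ρ-r0)^2
          = ((i:ℝ)+1)^2 * r1^(i+1) / r0^2 * (ρ-r0)^2 + K^2/D * (ρ-r0)^2 := by ring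
      have e6 : (((i:ℝ)+1) * r0^i + ((i:ℝ)+1)^2 * r1^(i+1) / r0^2
            + (((i:ℝ)+1) * r0^i)^2 / D) * (ρ-r0)^2
          = ((i:ℝ)+1) * r0^i * (ρ-r0)^2 + ((i:ℝ)+1)^2 * r1^(i+1) / r0^2 * (ρ-r0)^2
            + (((i:ℝ)+1) * r0^i)^2 / D * (ρ-r0)^2 := by ring
      linarith only [e1, e2, e4, e5.le, e5.ge, e6.le, e6.ge]
    have hφle : (ρ^(i+1) - 2 * m ρ) / ρ^(i+1) ≤ C₁ * (ρ-r0)^2 / r0^(i+1) := by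
      apply div_le_div₀ (by positivity) hnum_up hr0k
        (pow_le_pow_left₀ hr0.le hρr0.le _)
    have he2 : C₁ * (ρ-r0)^2 / r0^(i+1) = ((ρ-r0)/c₅)^2 := by
      rw [div_pow, hc₅sq]
      field_simp
    linarith only [hφle, he2.le, he2.ge]
  -- integrability majorant
  have hg_int : IntervalIntegrable
      (fun ρ : ℝ => c₄ ^ (-(1/2) : ℝ) * (ρ - r0) ^ (-(1/2) : ℝ)) volume r0 r1 := by
    have h1 : IntervalIntegrable (fun x : ℝ => x ^ (-(1/2) : ℝ)) volume 0 (r1 - r0) :=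
      intervalIntegrable_rpow' (by norm_num)
    have h2 := h1.comp_sub_right r0
    simp only [zero_add, sub_add_cancel] at h2
    exact h2.const_mul _
  -- continuity of the integrand on Ioc
  have hm_cont : ContinuousOn m (Set.Ioc r0 r1) := by
    rw [hmdef]
    apply continuousOn_const.mul
    apply continuousOn_const.add
    exact ContinuousOn.div
      (continuous_const.mul (continuous_id.sub continuous_const)).continuousOn
      (continuous_const.add (continuous_const.mul
        (continuous_id.sub continuous_const))).continuousOn
      (fun x hx => (hden x hx.1.le).ne')
  have hφ_cont : ContinuousOn
      (fun ρ : ℝ => 1 - 2 * m ρ * ρ ^ ((2:ℝ) - ((i+3 : ℕ):ℝ))) (Set.Ioc r0 r1) := by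
    apply continuousOn_const.sub
    apply ContinuousOn.mul (continuousOn_const.mul hm_cont)
    exact ContinuousOn.rpow_const continuousOn_id
      (fun x hx => Or.inl (ne_of_gt (lt_trans hr0 hx.1)))
  have hf_cont : ContinuousOn
      (fun ρ : ℝ => (1 - 2 * m ρ * ρ ^ ((2:ℝ) - ((i+3 : ℕ):ℝ))) ^ (-(1/2) : ℝ))
      (Set.Ioc r0 r1) :=
    hφ_cont.rpow_const (fun x hx => Or.inl (hphi_pos x hx.1).ne')
  -- interval integrability of the integrand
  have hInt : IntervalIntegrable
      (fun ρ : ℝ => (1 - 2 * m ρ * ρ ^ ((2:ℝ) - ((i+3 : ℕ):ℝ))) ^ (-(1/2) : ℝ))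
      volume r0 r1 := by
    apply hg_int.mono_fun
    · rw [Set.uIoc_of_le hr01.le]
      exact hf_cont.aestronglyMeasurable measurableSet_Ioc
    · rw [Set.uIoc_of_le hr01.le]
      filter_upwards [ae_restrict_mem measurableSet_Ioc] with x hx
      have hx0 : 0 < x - r0 := by linarith [hx.1]
      have h1 : 0 < c₄ * (x - r0) := mul_pos hc₄pos hx0
      rw [Real.norm_of_nonneg (rpow_neg_half_nonneg _), Real.norm_of_nonneg
        (mul_nonneg (rpow_neg_half_nonneg _) (rpow_neg_half_nonneg _))]
      calc (1 - 2 * m x * x ^ ((2:ℝ) - ((i+3 : ℕ):ℝ))) ^ (-(1/2) : ℝ)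
          ≤ (c₄ * (x - r0)) ^ (-(1/2) : ℝ) :=
            Real.rpow_le_rpow_of_nonpos h1 (hlowφ x hx) (by norm_num)
        _ = c₄ ^ (-(1/2) : ℝ) * (x - r0) ^ (-(1/2) : ℝ) :=
            Real.mul_rpow hc₄pos.le hx0.le
  -- sub-interval integrability
  have hInt1 : IntervalIntegrable
      (fun ρ : ℝ => (1 - 2 * m ρ * ρ ^ ((2:ℝ) - ((i+3 : ℕ):ℝ))) ^ (-(1/2) : ℝ))
      volume r0 (r0 + σ) := by
    apply hInt.mono_set
    rw [Set.uIcc_of_le (by linarith : r0 ≤ r0 + σ), Set.uIcc_of_le hr01.le]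
    exact Set.Icc_subset_Icc le_rfl hσr1
  have hInt2 : IntervalIntegrable
      (fun ρ : ℝ => (1 - 2 * m ρ * ρ ^ ((2:ℝ) - ((i+3 : ℕ):ℝ))) ^ (-(1/2) : ℝ))
      volume (r0 + σ) r1 := by
    apply hInt.mono_set
    rw [Set.uIcc_of_le hσr1, Set.uIcc_of_le hr01.le]
    exact Set.Icc_subset_Icc (by linarith) le_rfl
  -- the comparison integrand on [r0+σ, r1]
  have hg2_int : IntervalIntegrable (fun ρ : ℝ => c₅ * (ρ - r0)⁻¹) volume (r0 + σ) r1 := by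
    apply ContinuousOn.intervalIntegrable
    rw [Set.uIcc_of_le hσr1]
    apply continuousOn_const.mul
    exact ContinuousOn.inv₀ (continuous_id.sub continuous_const).continuousOn
      (fun x hx => ne_of_gt (by linarith [hx.1, hσ0] : (0:ℝ) < x - r0))
  have hmono2 : (∫ ρ in (r0 + σ)..r1, c₅ * (ρ - r0)⁻¹)
      ≤ ∫ ρ in (r0 + σ)..r1,
          (1 - 2 * m ρ * ρ ^ ((2:ℝ) - ((i+3 : ℕ):ℝ))) ^ (-(1/2) : ℝ) := by
    apply intervalIntegral.integral_mono_on hσr1 hg2_int hInt2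
    intro x hx
    have hx0 : r0 < x := by linarith [hx.1, hσ0]
    have hy : 0 < (x - r0)/c₅ := div_pos (by linarith) hc₅
    have h2 := inv_le_rpow_neg_half (hphi_pos x hx0) hy (hupφ x hx)
    rwa [inv_div, div_eq_mul_inv] at h2
  -- value of the comparison integral
  have hval : (∫ ρ in (r0 + σ)..r1, c₅ * (ρ - r0)⁻¹)
      = c₅ * Real.log ((r1 - r0)/σ) := by
    rw [intervalIntegral.integral_const_mul]
    congr 1
    have h := intervalIntegral.integral_comp_sub_right (a := r0 + σ) (b := r1)
      (fun x : ℝ => x⁻¹) r0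
    rw [h, show r0 + σ - r0 = σ by ring]
    apply integral_inv
    rw [Set.uIcc_of_le (by linarith : σ ≤ r1 - r0)]
    intro hmem
    exact absurd hmem.1 (not_le.mpr hσ0)
  -- the log lower bound
  have hlog : L + 1 ≤ c₅ * Real.log ((r1 - r0)/σ) := by
    have hgt : Real.exp ((L+1)/c₅) ≤ (r1 - r0)/σ := by
      rw [le_div_iff₀ hσ0]
      have h1 := mul_le_mul_of_nonneg_left hσexp (Real.exp_pos ((L+1)/c₅)).le
      have h2 : Real.exp ((L+1)/c₅) * ((r1 - r0) * Real.exp (-((L+1)/c₅))) = r1 - r0 := by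
        rw [Real.exp_neg]
        field_simp
      linarith only [h1, h2.le, h2.ge]
    have h3 : (L+1)/c₅ ≤ Real.log ((r1 - r0)/σ) := by
      rw [Real.le_log_iff_exp_le (div_pos (by linarith) hσ0)]
      exact hgt
    have h4 := mul_le_mul_of_nonneg_left h3 hc₅.le
    have h5 : c₅ * ((L+1)/c₅) = L + 1 := by field_simp
    linarith only [h4, h5.le, h5.ge]
  -- splitting the integral
  have hsplit := intervalIntegral.integral_add_adjacent_intervals hInt1 hInt2
  have hI1 : 0 ≤ ∫ ρ in r0..(r0 + σ),
      (1 - 2 * m ρ * ρ ^ ((2:ℝ) - ((i+3 : ℕ):ℝ))) ^ (-(1/2) : ℝ) :=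
    intervalIntegral.integral_nonneg (by linarith) (fun u _ => rpow_neg_half_nonneg _)
  have hGT : L < ∫ ρ in r0..r1,
      (1 - 2 * m ρ * ρ ^ ((2:ℝ) - ((i+3 : ℕ):ℝ))) ^ (-(1/2) : ℝ) := by
    have : L + 1 ≤ ∫ ρ in (r0 + σ)..r1,
        (1 - 2 * m ρ * ρ ^ ((2:ℝ) - ((i+3 : ℕ):ℝ))) ^ (-(1/2) : ℝ) := by
      calc L + 1 ≤ c₅ * Real.log ((r1 - r0)/σ) := hlog
        _ = ∫ ρ in (r0 + σ)..r1, c₅ * (ρ - r0)⁻¹ := hval.symm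
        _ ≤ _ := hmono2
    linarith only [this, hI1, hsplit.le, hsplit.ge, hL]
  -- smoothness
  have hsmooth : ContDiffOn ℝ (⊤ : ℕ∞) m (Set.Ici r0) := by
    rw [hmdef]
    apply ContDiffOn.mul contDiffOn_const
    apply ContDiffOn.add contDiffOn_const
    exact ContDiffOn.div
      ((contDiff_const.mul (contDiff_id.sub contDiff_const)).contDiffOn)
      ((contDiff_const.add (contDiff_const.mul
        (contDiff_id.sub contDiff_const))).contDiffOn)
      (fun x hx => (hden x hx).ne')
  -- monotonicity
  have hmono : MonotoneOn m (Set.Ici r0) := by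
    intro x hx y hy hxy
    have hsx : D * K * (x - r0) / (D + K * (x - r0))
        ≤ D * K * (y - r0) / (D + K * (y - r0)) := by
      rw [div_le_div_iff₀ (hden x hx) (hden y hy)]
      have h1 : 0 ≤ D * D * K * (y - x) :=
        mul_nonneg (mul_nonneg (mul_nonneg hD.le hD.le) hK0) (by linarith)
      have h2 : D * K * (x - r0) * (D + K * (y - r0))
          = D * K * (y - r0) * (D + K * (x - r0)) - D * D * K * (y - x) := by ring
      linarith only [h1, h2.le, h2.ge]
    simp only [hmdef]
    linarith only [hsx]
  -- boundary value
  have hval0 : m r0 = (1/2) * r0 ^ (i+1) := by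
    simp only [hmdef, sub_self, mul_zero, zero_div, add_zero]
  -- strict bound
  have hlt : ∀ ρ : ℝ, r0 < ρ → 2 * m ρ < ρ ^ (i+1) := by
    intro ρ hρ
    linarith only [hnum_pos ρ hρ]
  -- sup bound
  have hsup : ∀ ρ : ℝ, r0 ≤ ρ → m ρ ≤ (1 + δ) * ((1/2) * r0 ^ (i+1)) := by
    intro ρ hρ
    have h1 := hsD ρ hρ
    have h2 := h2m ρ
    linarith only [h1, h2.le, h2.ge, hDdef.le, hDdef.ge]
  exact ⟨m, hsmooth, hmono, hval0, hlt, hsup, hInt, hGT⟩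
end
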